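/- arXiv:2502.07923 — 10 statements merged into one kernel-verified Lean document; each statement's English description precedes it below -/
import Mathlib

section
/- Let ∇f(x) ∈ R^d be a fixed vector and g ∈ R^d a random vector with E[|g_i - ∇f(x)_i|^κ] ≤ σ_i^κ for each coordinate i and some κ ∈ (1,2]. Then ∑_{i=1}^d |∇f(x)_i| · P(sign(∇f(x)_i) ≠ sign(g_i)) ≤ ∑_{i=1}^d σ_i = ‖σ⃗‖_1. -/
open MeasureTheory Finset

/-- Coordinatewise sign failure bound: if the stochastic gradient `g` has bounded `κ`-th
moment noise `σ i` in each coordinate, then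
`∑ i |∇f(x)_i| · P(sign(∇f(x)_i) ≠ sign(g_i)) ≤ ∑ i σ i = ‖σ⃗‖₁`. -/
theorem stmt_3 {Ω : Type*} [MeasureSpace Ω] (hP : IsProbabilityMeasure (volume : Measure Ω))
    (d : ℕ) (v : Fin d → ℝ) (g : Ω → Fin d → ℝ) (σ : Fin d → ℝ) (κ : ℝ)
    (hκ1 : 1 < κ) (hκ2 : κ ≤ 2) (hσ : ∀ i, 0 ≤ σ i)
    (hmeas : ∀ i, AEMeasurable (fun ω => g ω i))
    (hint : ∀ i, Integrable (fun ω => |g ω i - v i| ^ κ))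
    (hmom : ∀ i, ∫ ω, |g ω i - v i| ^ κ ≤ σ i ^ κ) :
    ∑ i, |v i| * (volume {ω | Real.sign (v i) ≠ Real.sign (g ω i)}).toReal ≤ ∑ i, σ i := by
  apply Finset.sum_le_sum
  intro i _
  by_cases hv : v i = 0
  · simpa [hv] using hσ i
  have hvpos : 0 < |v i| := abs_pos.mpr hv
  set P := (volume {ω | Real.sign (v i) ≠ Real.sign (g ω i)}).toReal with hPdef
  have hP1 : P ≤ 1 := by
    have := prob_le_one (μ := (volume : Measure Ω))
      (s := {ω | Real.sign (v i) ≠ Real.sign (g ω i)})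
    simpa [hPdef] using ENNReal.toReal_mono (by simp) this
  have hPnn : 0 ≤ P := ENNReal.toReal_nonneg
  rcases le_or_gt (|v i|) (σ i) with hle | hlt
  · have := mul_le_mul_of_nonneg_left hP1 (le_of_lt hvpos)
    nlinarith
  · -- Markov case
    have hsub : {ω | Real.sign (v i) ≠ Real.sign (g ω i)} ⊆
        {ω | |v i| ^ κ ≤ |g ω i - v i| ^ κ} := by
      intro ω hω
      have h1 : |v i| ≤ |g ω i - v i| := by
        rcases lt_trichotomy (v i) 0 with h | h | h
        · have hg : 0 ≤ g ω i := by
            by_contra hg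
            push_neg at hg
            exact hω (by rw [Real.sign_of_neg h, Real.sign_of_neg hg])
          rw [abs_of_neg h, abs_of_nonneg (by linarith)]
          linarith
        · exact absurd h hv
        · have hg : g ω i ≤ 0 := by
            by_contra hg
            push_neg at hg
            exact hω (by rw [Real.sign_of_pos h, Real.sign_of_pos hg])
          rw [abs_of_pos h, abs_of_nonpos (by linarith)]
          linarith
      exact Real.rpow_le_rpow (abs_nonneg _) h1 (by linarith)
    have hmark : |v i| ^ κ * P ≤ σ i ^ κ := by
      have h2 : |v i| ^ κ * P ≤
          |v i| ^ κ * (volume {ω | |v i| ^ κ ≤ |g ω i - v i| ^ κ}).toReal := by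
        apply mul_le_mul_of_nonneg_left _ (Real.rpow_nonneg (abs_nonneg _) κ)
        apply ENNReal.toReal_mono (by simp) (measure_mono hsub)
      have h3 := mul_meas_ge_le_integral_of_nonneg (μ := (volume : Measure Ω))
        (f := fun ω => |g ω i - v i| ^ κ)
        (ae_of_all _ fun ω => Real.rpow_nonneg (abs_nonneg _) κ) (hint i) (|v i| ^ κ)
      exact h2.trans (h3.trans (hmom i))
    have hσκ : σ i ^ κ ≤ σ i * |v i| ^ (κ - 1) := by
      rcases eq_or_lt_of_le (hσ i) with h0 | h0
      · rw [← h0, Real.zero_rpow (by positivity), zero_mul]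
      · calc σ i ^ κ = σ i ^ (1 + (κ - 1)) := by ring_nf
          _ = σ i ^ (1:ℝ) * σ i ^ (κ - 1) := Real.rpow_add h0 _ _
          _ = σ i * σ i ^ (κ - 1) := by rw [Real.rpow_one]
          _ ≤ σ i * |v i| ^ (κ - 1) := by
            apply mul_le_mul_of_nonneg_left _ (hσ i)
            exact Real.rpow_le_rpow (hσ i) (le_of_lt hlt) (by linarith)
    have hvκ : |v i| ^ κ = |v i| * |v i| ^ (κ - 1) := by
      rw [show κ = 1 + (κ - 1) by ring, Real.rpow_add hvpos, Real.rpow_one]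
      ring_nf
    have hkey : |v i| * P * |v i| ^ (κ - 1) ≤ σ i * |v i| ^ (κ - 1) := by
      calc |v i| * P * |v i| ^ (κ - 1) = |v i| ^ κ * P := by rw [hvκ]; ring
        _ ≤ σ i ^ κ := hmark
        _ ≤ σ i * |v i| ^ (κ - 1) := hσκ
    have hpow : 0 < |v i| ^ (κ - 1) := Real.rpow_pos_of_pos hvpos _
    exact le_of_mul_le_mul_right hkey hpow
end

section
/- Let f: R^d → R be (L_0, L_1)-smooth, i.e., ‖∇f(x) - ∇f(y)‖ ≤ (L_0 + L_1 sup_{u ∈ [x,y]} ‖∇f(u)‖)‖x - y‖ for all x, y. Then for all x, y ∈ R^d: ‖∇f(x) - ∇f(y)‖_2 ≤ (L_0 + L_1‖∇f(y)‖_2) exp(L_1‖x - y‖_2) ‖x - y‖_2. -/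
open MeasureTheory

/-- `(L₀, L₁)`-smoothness: `‖∇f(x) - ∇f(y)‖ ≤ (L₀ + L₁ sup_{u∈[x,y]} ‖∇f(u)‖)‖x - y‖`. -/
def GenSmooth {d : ℕ} (L0 L1 : ℝ) (f : EuclideanSpace ℝ (Fin d) → ℝ) : Prop :=
  ∀ x y : EuclideanSpace ℝ (Fin d),
    ‖gradient f x - gradient f y‖ ≤
      (L0 + L1 * ⨆ u ∈ segment ℝ x y, ‖gradient f u‖) * ‖x - y‖

section Aux

open Set

variable {E : Type*} [NormedAddCommGroup E] [NormedSpace ℝ E]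

/-- Points of the segment between `γ t` and `γ s` are of the form `γ v`, `v ∈ [s,t]`. -/
lemma aux_mem_seg (x y : E) {s t : ℝ} (hst : s ≤ t) {u : E}
    (hu : u ∈ segment ℝ (y + t • (x - y)) (y + s • (x - y))) :
    ∃ v ∈ Icc s t, u = y + v • (x - y) := by
  rw [segment_eq_image] at hu
  obtain ⟨θ, hθ, rfl⟩ := hu
  refine ⟨(1 - θ) * t + θ * s, ⟨?_, ?_⟩, ?_⟩
  · nlinarith [hθ.1, hθ.2]
  · nlinarith [hθ.1, hθ.2]
  · match_scalars <;> ring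

/-- `γ v` belongs to the segment between `γ t` and `γ s` when `s ≤ v ≤ t`. -/
lemma aux_seg_mem (x y : E) {s v t : ℝ} (hsv : s ≤ v) (hvt : v ≤ t) :
    y + v • (x - y) ∈ segment ℝ (y + t • (x - y)) (y + s • (x - y)) := by
  rcases eq_or_lt_of_le (hsv.trans hvt) with h | h
  · have hv : v = s := le_antisymm (h ▸ hvt) hsv
    subst hv
    exact right_mem_segment ℝ _ _
  · rw [segment_eq_image]
    refine ⟨(t - v) / (t - s), ⟨div_nonneg (by linarith) (by linarith),
      (div_le_one (by linarith)).2 (by linarith)⟩, ?_⟩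
    have hts : t - s ≠ 0 := sub_ne_zero.2 (ne_of_gt h)
    match_scalars <;> field_simp <;> ring

/-- Norm of the difference of two points on the line. -/
lemma aux_norm_diff (x y : E) {s t : ℝ} (hst : s ≤ t) :
    ‖(y + t • (x - y)) - (y + s • (x - y))‖ = (t - s) * ‖x - y‖ := by
  have : (y + t • (x - y)) - (y + s • (x - y)) = (t - s) • (x - y) := by module
  rw [this, norm_smul, Real.norm_eq_abs, abs_of_nonneg (by linarith)]

end Aux

section Main

open Set

variable {d : ℕ} {f : EuclideanSpace ℝ (Fin d) → ℝ} {L0 L1 : ℝ}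

/-- If the gradient norm is bounded by `M` on the subsegment, smoothness gives a Lipschitz-type
bound. -/
lemma smooth_on_line (hL1 : 0 ≤ L1) (hsmooth : GenSmooth L0 L1 f)
    (x y : EuclideanSpace ℝ (Fin d)) {s t : ℝ} (hst : s ≤ t) {M : ℝ} (hM0 : 0 ≤ M)
    (hbdd : ∀ v ∈ Icc s t, ‖gradient f (y + v • (x - y))‖ ≤ M) :
    ‖gradient f (y + t • (x - y)) - gradient f (y + s • (x - y))‖ ≤
      (L0 + L1 * M) * ((t - s) * ‖x - y‖) := by
  have H := hsmooth (y + t • (x - y)) (y + s • (x - y))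
  rw [aux_norm_diff x y hst] at H
  refine H.trans (mul_le_mul_of_nonneg_right (add_le_add_right
    (mul_le_mul_of_nonneg_left ?_ hL1) L0) (mul_nonneg (by linarith) (norm_nonneg _)))
  refine Real.iSup_le (fun u => Real.iSup_le (fun hu => ?_) hM0) hM0
  obtain ⟨v, hv, rfl⟩ := aux_mem_seg x y hst hu
  exact hbdd v hv

/-- If the gradient norm is unbounded on the subsegment, the junk value of `sSup` gives an
`L0`-Lipschitz bound. -/
lemma smooth_on_line_unbdd (hsmooth : GenSmooth L0 L1 f)
    (x y : EuclideanSpace ℝ (Fin d)) {s t : ℝ} (hst : s ≤ t)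
    (hnb : ¬ ∃ M, ∀ v ∈ Icc s t, ‖gradient f (y + v • (x - y))‖ ≤ M) :
    ‖gradient f (y + t • (x - y)) - gradient f (y + s • (x - y))‖ ≤
      L0 * ((t - s) * ‖x - y‖) := by
  have H := hsmooth (y + t • (x - y)) (y + s • (x - y))
  rw [aux_norm_diff x y hst] at H
  have hz : (⨆ u ∈ segment ℝ (y + t • (x - y)) (y + s • (x - y)), ‖gradient f u‖) = 0 := by
    apply Real.iSup_of_not_bddAbove
    rintro ⟨c, hc⟩
    refine hnb ⟨c, fun v hv => ?_⟩
    have hmem := aux_seg_mem x y hv.1 hv.2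
    calc ‖gradient f (y + v • (x - y))‖
        = ⨆ _ : (y + v • (x - y)) ∈ segment ℝ (y + t • (x - y)) (y + s • (x - y)),
            ‖gradient f (y + v • (x - y))‖ := (ciSup_pos (f := fun _ => ‖gradient f (y + v • (x - y))‖) hmem).symm
      _ ≤ c := hc (Set.mem_range_self _)
  rw [hz, mul_zero, add_zero] at H
  exact H

/-- Local boundedness of the gradient norm along a short piece of the segment. -/
lemma local_bound (hL0 : 0 ≤ L0) (hL1 : 0 ≤ L1) (hsmooth : GenSmooth L0 L1 f)
    (x y : EuclideanSpace ℝ (Fin d)) {s t : ℝ} (hst : s ≤ t)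
    (hhalf : L1 * ((t - s) * ‖x - y‖) ≤ 1 / 2) :
    ∀ v ∈ Icc s t, ‖gradient f (y + v • (x - y))‖ ≤
      2 * (‖gradient f (y + s • (x - y))‖ + L0 * ((t - s) * ‖x - y‖)) := by
  set r := ‖x - y‖ with hr
  set h : ℝ → ℝ := fun v => ‖gradient f (y + v • (x - y))‖ with hh
  have hr0 : 0 ≤ r := norm_nonneg _
  have hΔ0 : 0 ≤ (t - s) * r := mul_nonneg (by linarith) hr0
  have hL0Δ : 0 ≤ L0 * ((t - s) * r) := mul_nonneg hL0 hΔ0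
  have hhs : 0 ≤ h s := norm_nonneg _
  intro v hv
  have htri : ∀ w, s ≤ w → h w ≤ ‖gradient f (y + w • (x - y)) -
      gradient f (y + s • (x - y))‖ + h s := by
    intro w _
    have := norm_sub_norm_le (gradient f (y + w • (x - y))) (gradient f (y + s • (x - y)))
    simp only [hh]
    linarith
  by_cases hb : ∃ M, ∀ w ∈ Icc s v, h w ≤ M
  · obtain ⟨M0, hM0⟩ := hb
    have hne : (h '' Icc s v).Nonempty := ⟨h s, ⟨s, ⟨le_refl s, hv.1⟩, rfl⟩⟩
    have hbdd : BddAbove (h '' Icc s v) := ⟨M0, by rintro _ ⟨w, hw, rfl⟩; exact hM0 w hw⟩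
    set M := sSup (h '' Icc s v) with hM
    have hvM : h v ≤ M := le_csSup hbdd ⟨v, ⟨hv.1, le_refl v⟩, rfl⟩
    have hM0' : 0 ≤ M := le_trans (norm_nonneg _) hvM
    have key : ∀ w ∈ Icc s v, h w ≤ h s + (L0 * ((t - s) * r) + M / 2) := by
      intro w hw
      have hsub : ∀ u ∈ Icc s w, h u ≤ M := fun u hu =>
        le_csSup hbdd ⟨u, ⟨hu.1, hu.2.trans hw.2⟩, rfl⟩
      have := smooth_on_line hL1 hsmooth x y hw.1 hM0' hsub
      have hle : (L0 + L1 * M) * ((w - s) * r) ≤ L0 * ((t - s) * r) + M / 2 := by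
        have h1 : (w - s) * r ≤ (t - s) * r :=
          mul_le_mul_of_nonneg_right (by linarith [hw.2, hv.2]) hr0
        have h2 : 0 ≤ (w - s) * r := mul_nonneg (by linarith [hw.1]) hr0
        nlinarith [mul_nonneg hL1 hM0']
      linarith [htri w hw.1, this]
    have hMle : M ≤ h s + (L0 * ((t - s) * r) + M / 2) := by
      apply csSup_le hne
      rintro _ ⟨w, hw, rfl⟩
      exact key w hw
    linarith
  · have h1 := smooth_on_line_unbdd hsmooth x y hv.1 hb
    have h2 : L0 * ((v - s) * r) ≤ L0 * ((t - s) * r) :=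
      mul_le_mul_of_nonneg_left (mul_le_mul_of_nonneg_right (by linarith [hv.2]) hr0) hL0
    linarith [htri v hv.1, h1]

/-- Global boundedness of the gradient norm along the segment. -/
lemma global_bound (hL0 : 0 ≤ L0) (hL1 : 0 ≤ L1) (hsmooth : GenSmooth L0 L1 f)
    (x y : EuclideanSpace ℝ (Fin d)) :
    ∃ M, 0 ≤ M ∧ ∀ v ∈ Icc (0 : ℝ) 1, ‖gradient f (y + v • (x - y))‖ ≤ M := by
  set r := ‖x - y‖ with hr
  set h : ℝ → ℝ := fun v => ‖gradient f (y + v • (x - y))‖ with hh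
  have hr0 : 0 ≤ r := norm_nonneg _
  set n : ℕ := ⌈2 * (L1 * r)⌉₊ + 1 with hn
  have hn0 : (0 : ℝ) < n := by positivity
  have hnge : 2 * (L1 * r) ≤ n := le_trans (Nat.le_ceil _) (by exact_mod_cast Nat.le_succ _)
  have hstep : ∀ k : ℕ, L1 * (((k + 1 : ℕ) / n - (k : ℝ) / n) * r) ≤ 1 / 2 := by
    intro k
    have : ((k + 1 : ℕ) / n - (k : ℝ) / n) = 1 / n := by
      push_cast
      field_simp
      ring
    rw [this, show L1 * (1 / (n : ℝ) * r) = (L1 * r) / n by ring, div_le_iff₀ hn0]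
    linarith
  have hind : ∀ k : ℕ, ∃ M, 0 ≤ M ∧ ∀ v ∈ Icc (0 : ℝ) ((k : ℝ) / n), h v ≤ M := by
    intro k
    induction k with
    | zero =>
      refine ⟨h 0, norm_nonneg _, fun v hv => ?_⟩
      have : v = 0 := le_antisymm (by simpa using hv.2) hv.1
      rw [this]
    | succ k ih =>
      obtain ⟨M, hM0, hM⟩ := ih
      have hkk : (k : ℝ) / n ≤ ((k + 1 : ℕ) : ℝ) / n := by
        push_cast
        gcongr
        linarith
      set C := 2 * (h ((k : ℝ) / n) + L0 * ((((k + 1 : ℕ) : ℝ) / n - (k : ℝ) / n) * r)) with hC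
      have hloc := local_bound hL0 hL1 hsmooth x y hkk (hstep k)
      refine ⟨max M C, le_trans hM0 (le_max_left _ _), fun v hv => ?_⟩
      by_cases hvk : v ≤ (k : ℝ) / n
      · exact le_trans (hM v ⟨hv.1, hvk⟩) (le_max_left _ _)
      · exact le_trans (hloc v ⟨le_of_not_ge hvk, hv.2⟩) (le_max_right _ _)
  obtain ⟨M, hM0, hM⟩ := hind n
  refine ⟨M, hM0, fun v hv => hM v ⟨hv.1, ?_⟩⟩
  rw [div_self (ne_of_gt hn0)]
  exact hv.2

end Main

/-- For an `(L₀, L₁)`-smooth function,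
`‖∇f(x) - ∇f(y)‖ ≤ (L₀ + L₁‖∇f(y)‖) exp(L₁‖x - y‖) ‖x - y‖`. -/
theorem stmt_6 (d : ℕ) (f : EuclideanSpace ℝ (Fin d) → ℝ) (L0 L1 : ℝ)
    (hL0 : 0 ≤ L0) (hL1 : 0 ≤ L1) (hf : Differentiable ℝ f) (hsmooth : GenSmooth L0 L1 f) :
    ∀ x y : EuclideanSpace ℝ (Fin d),
      ‖gradient f x - gradient f y‖ ≤
        (L0 + L1 * ‖gradient f y‖) * Real.exp (L1 * ‖x - y‖) * ‖x - y‖ := by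
  intro x y
  by_cases hr0 : ‖x - y‖ = 0
  · have hxy : x = y := sub_eq_zero.1 (norm_eq_zero.1 hr0)
    simp [hxy]
  by_cases hL1z : L1 = 0
  · subst hL1z
    have H := hsmooth x y
    simp only [zero_mul, add_zero, Real.exp_zero, mul_one] at H ⊢
    simpa using H
  have hrpos : 0 < ‖x - y‖ := lt_of_le_of_ne (norm_nonneg _) (Ne.symm hr0)
  have hL1pos : 0 < L1 := lt_of_le_of_ne hL1 (Ne.symm hL1z)
  classical
  set h : ℝ → ℝ := fun v => ‖gradient f (y + v • (x - y))‖ with hh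
  obtain ⟨M, hM0, hM⟩ := global_bound hL0 hL1 hsmooth x y
  set ψ : ℝ → ℝ := fun t => sSup (h '' Set.Icc 0 t) with hψ
  have hbddt : ∀ t ∈ Set.Icc (0:ℝ) 1, BddAbove (h '' Set.Icc 0 t) := by
    intro t ht
    exact ⟨M, by rintro _ ⟨v, hv, rfl⟩; exact hM v ⟨hv.1, hv.2.trans ht.2⟩⟩
  have hnet : ∀ t, 0 ≤ t → (h '' Set.Icc 0 t).Nonempty :=
    fun t ht => ⟨h 0, ⟨0, ⟨le_refl _, ht⟩, rfl⟩⟩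
  have hhle : ∀ t ∈ Set.Icc (0:ℝ) 1, ∀ v ∈ Set.Icc (0:ℝ) t, h v ≤ ψ t :=
    fun t ht v hv => le_csSup (hbddt t ht) ⟨v, hv, rfl⟩
  have hψnn : ∀ t ∈ Set.Icc (0:ℝ) 1, 0 ≤ ψ t :=
    fun t ht => le_trans (norm_nonneg _) (hhle t ht 0 ⟨le_refl _, ht.1⟩)
  have hψM : ∀ t ∈ Set.Icc (0:ℝ) 1, ψ t ≤ M := by
    intro t ht
    apply csSup_le (hnet t ht.1)
    rintro _ ⟨v, hv, rfl⟩
    exact hM v ⟨hv.1, hv.2.trans ht.2⟩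
  have hψ0 : ψ 0 ≤ h 0 := by
    apply csSup_le (hnet 0 le_rfl)
    rintro _ ⟨v, hv, rfl⟩
    have : v = 0 := le_antisymm hv.2 hv.1
    rw [this]
  have key : ∀ s, 0 ≤ s → ∀ t, s ≤ t → t ≤ 1 →
      ψ t ≤ ψ s + (L0 + L1 * ψ t) * ((t - s) * ‖x - y‖) := by
    intro s hs t hst ht1
    have htI : t ∈ Set.Icc (0:ℝ) 1 := ⟨hs.trans hst, ht1⟩
    have hsI : s ∈ Set.Icc (0:ℝ) 1 := ⟨hs, hst.trans ht1⟩
    have hfac : 0 ≤ L0 + L1 * ψ t := add_nonneg hL0 (mul_nonneg hL1 (hψnn t htI))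
    apply csSup_le (hnet t (hs.trans hst))
    rintro _ ⟨v, hv, rfl⟩
    by_cases hvs : v ≤ s
    · have h1 : h v ≤ ψ s := hhle s hsI v ⟨hv.1, hvs⟩
      have h2 : 0 ≤ (L0 + L1 * ψ t) * ((t - s) * ‖x - y‖) :=
        mul_nonneg hfac (mul_nonneg (by linarith) hrpos.le)
      linarith
    · push_neg at hvs
      have hsv : s ≤ v := hvs.le
      have hsub : ∀ w ∈ Set.Icc s v, h w ≤ ψ t :=
        fun w hw => hhle t htI w ⟨hs.trans hw.1, hw.2.trans hv.2⟩
      have hS := smooth_on_line hL1 hsmooth x y hsv (hψnn t htI) hsub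
      have htri := norm_sub_norm_le (gradient f (y + v • (x - y)))
        (gradient f (y + s • (x - y)))
      have hψs : h s ≤ ψ s := hhle s hsI s ⟨hs, le_refl _⟩
      have hmono : (L0 + L1 * ψ t) * ((v - s) * ‖x - y‖) ≤
          (L0 + L1 * ψ t) * ((t - s) * ‖x - y‖) :=
        mul_le_mul_of_nonneg_left
          (mul_le_mul_of_nonneg_right (by linarith [hv.2]) hrpos.le) hfac
      simp only [hh] at hψs ⊢
      linarith
  have hmono : ∀ s t, 0 ≤ s → s ≤ t → t ≤ 1 → ψ s ≤ ψ t := fun s t hs hst ht1 =>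
    csSup_le_csSup (hbddt t ⟨hs.trans hst, ht1⟩) (hnet s hs)
      (Set.image_mono (Set.Icc_subset_Icc le_rfl hst))
  have hlip' : ∀ a ∈ Set.Icc (0:ℝ) 1, ∀ b ∈ Set.Icc (0:ℝ) 1, a ≤ b →
      ψ b - ψ a ≤ (L0 + L1 * M) * ‖x - y‖ * (b - a) := by
    intro a ha b hb hab
    have hk := key a ha.1 b hab hb.2
    have h1 := hψM b hb
    have h2 := hψnn b hb
    nlinarith [mul_nonneg (mul_nonneg hL1 (sub_nonneg.2 h1))
      (mul_nonneg (sub_nonneg.2 hab) (norm_nonneg (x - y)))]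
  have hcont : ContinuousOn ψ (Set.Icc 0 1) := by
    apply LipschitzOnWith.continuousOn (K := Real.toNNReal ((L0 + L1 * M) * ‖x - y‖))
    apply LipschitzOnWith.of_dist_le'
    intro a ha b hb
    rcases le_total a b with hab | hab
    · rw [Real.dist_eq, Real.dist_eq, abs_of_nonpos (by linarith [hmono a b ha.1 hab hb.2]),
        abs_of_nonpos (by linarith)]
      have := hlip' a ha b hb hab
      linarith
    · rw [Real.dist_eq, Real.dist_eq, abs_of_nonneg (by linarith [hmono b a hb.1 hab ha.2]),
        abs_of_nonneg (by linarith)]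
      have := hlip' b hb a ha hab
      linarith
  have hf' : ∀ s ∈ Set.Ico (0:ℝ) 1, ∀ ρ, L1 * ‖x - y‖ * ψ s + L0 * ‖x - y‖ < ρ →
      ∃ᶠ z in nhdsWithin s (Set.Ioi s), (z - s)⁻¹ * (ψ z - ψ s) < ρ := by
    intro s hs ρ hρ
    have hc0 : 0 ≤ L1 * (L0 + L1 * M) * ‖x - y‖ ^ 2 :=
      mul_nonneg (mul_nonneg hL1 (add_nonneg hL0 (mul_nonneg hL1 hM0))) (sq_nonneg _)
    set δ' : ℝ := min (1 - s) ((ρ - (L1 * ‖x - y‖ * ψ s + L0 * ‖x - y‖)) /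
      (L1 * (L0 + L1 * M) * ‖x - y‖ ^ 2 + 1)) with hδ'
    have hδ'pos : 0 < δ' := by
      apply lt_min (by linarith [hs.2])
      apply div_pos (by linarith [hρ]) (by linarith)
    have hIoc : Set.Ioc s (s + δ') ∈ nhdsWithin s (Set.Ioi s) :=
      Ioc_mem_nhdsGT (by linarith)
    apply Filter.Eventually.frequently
    filter_upwards [hIoc] with z hz
    have hz1 : z ≤ 1 := by
      have := min_le_left (1 - s) ((ρ - (L1 * ‖x - y‖ * ψ s + L0 * ‖x - y‖)) /
        (L1 * (L0 + L1 * M) * ‖x - y‖ ^ 2 + 1))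
      have := hz.2
      rw [hδ'] at *
      linarith
    have hzs : 0 < z - s := by linarith [hz.1]
    have hk := key s hs.1 z hz.1.le hz1
    have hzI : z ∈ Set.Icc (0:ℝ) 1 := ⟨hs.1.trans hz.1.le, hz1⟩
    have hsI : s ∈ Set.Icc (0:ℝ) 1 := ⟨hs.1, hs.2.le⟩
    have h2 : ψ z ≤ ψ s + (L0 + L1 * M) * ‖x - y‖ * (z - s) := by
      have := hlip' s hsI z hzI hz.1.le
      linarith
    have h3 : (z - s)⁻¹ * (ψ z - ψ s) ≤ (L0 + L1 * ψ z) * ‖x - y‖ := by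
      rw [inv_mul_le_iff₀ hzs]
      nlinarith [hk]
    have hhint : L1 * ‖x - y‖ * ψ z ≤
        L1 * ‖x - y‖ * (ψ s + (L0 + L1 * M) * ‖x - y‖ * (z - s)) :=
      mul_le_mul_of_nonneg_left h2 (mul_nonneg hL1 (norm_nonneg _))
    have h5 : z - s ≤ (ρ - (L1 * ‖x - y‖ * ψ s + L0 * ‖x - y‖)) /
        (L1 * (L0 + L1 * M) * ‖x - y‖ ^ 2 + 1) := by
      have := min_le_right (1 - s) ((ρ - (L1 * ‖x - y‖ * ψ s + L0 * ‖x - y‖)) /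
        (L1 * (L0 + L1 * M) * ‖x - y‖ ^ 2 + 1))
      have h6 := hz.2
      rw [hδ'] at *
      linarith
    have h6 : L1 * (L0 + L1 * M) * ‖x - y‖ ^ 2 * (z - s) <
        ρ - (L1 * ‖x - y‖ * ψ s + L0 * ‖x - y‖) := by
      set c := L1 * (L0 + L1 * M) * ‖x - y‖ ^ 2 with hc
      set X := ρ - (L1 * ‖x - y‖ * ψ s + L0 * ‖x - y‖) with hX
      have hX0 : 0 < X := by rw [hX]; linarith [hρ]
      calc c * (z - s) ≤ c * (X / (c + 1)) := mul_le_mul_of_nonneg_left h5 hc0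
        _ < X := by
          rw [mul_div_assoc']
          rw [div_lt_iff₀ (by linarith)]
          nlinarith
    nlinarith [h3, hhint, h6]
  have hgron := le_gronwallBound_of_liminf_deriv_right_le
    (f := ψ) (f' := fun s => L1 * ‖x - y‖ * ψ s + L0 * ‖x - y‖) (a := 0) (b := 1)
    (δ := h 0) (K := L1 * ‖x - y‖) (ε := L0 * ‖x - y‖) hcont hf' hψ0 (fun s _ => le_rfl)
  have hgron1 := hgron 1 (Set.right_mem_Icc.2 zero_le_one)
  have hKne : L1 * ‖x - y‖ ≠ 0 := ne_of_gt (mul_pos hL1pos hrpos)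
  rw [gronwallBound_of_K_ne_0 hKne] at hgron1
  simp only [sub_zero, mul_one] at hgron1
  have hh0 : h 0 = ‖gradient f y‖ := by
    simp only [hh]
    norm_num
  rw [hh0] at hgron1
  have hdiv : L0 * ‖x - y‖ / (L1 * ‖x - y‖) = L0 / L1 :=
    mul_div_mul_right _ _ (ne_of_gt hrpos)
  rw [hdiv] at hgron1
  -- final assembly
  have h1I : (1:ℝ) ∈ Set.Icc (0:ℝ) 1 := Set.right_mem_Icc.2 zero_le_one
  have hfinal := smooth_on_line hL1 hsmooth x y (zero_le_one) (hψnn 1 h1I)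
    (fun v hv => hhle 1 h1I v hv)
  have hx1 : y + (1:ℝ) • (x - y) = x := by module
  have hy0 : y + (0:ℝ) • (x - y) = y := by module
  rw [hx1, hy0] at hfinal
  have hexp : L0 + L1 * (‖gradient f y‖ * Real.exp (L1 * ‖x - y‖) +
      L0 / L1 * (Real.exp (L1 * ‖x - y‖) - 1)) =
      (L0 + L1 * ‖gradient f y‖) * Real.exp (L1 * ‖x - y‖) := by
    field_simp
    ring
  calc ‖gradient f x - gradient f y‖ ≤ (L0 + L1 * ψ 1) * ((1 - 0) * ‖x - y‖) := hfinal
    _ ≤ (L0 + L1 * (‖gradient f y‖ * Real.exp (L1 * ‖x - y‖) +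
        L0 / L1 * (Real.exp (L1 * ‖x - y‖) - 1))) * ((1 - 0) * ‖x - y‖) := by
      apply mul_le_mul_of_nonneg_right
        (add_le_add_right (mul_le_mul_of_nonneg_left hgron1 hL1) L0)
      positivity
    _ = (L0 + L1 * ‖gradient f y‖) * Real.exp (L1 * ‖x - y‖) * ‖x - y‖ := by
      rw [hexp]; ring
end

section
/- Let f: R^d → R be (L_0, L_1)-smooth. Then for all x, y ∈ R^d: f(y) - f(x) - ⟨∇f(x), y - x⟩ ≤ ((L_0 + L_1‖∇f(x)‖_2)/2) · exp(L_1‖x - y‖_2) · ‖x - y‖_2². -/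
open MeasureTheory RealInnerProductSpace

open Set

namespace Stmt7Aux

variable {d : ℕ}

noncomputable def pt (x y : EuclideanSpace ℝ (Fin d)) (t : ℝ) : EuclideanSpace ℝ (Fin d) :=
  x + t • (y - x)

lemma pt_zero (x y : EuclideanSpace ℝ (Fin d)) : pt x y 0 = x := by simp [pt]

lemma pt_one (x y : EuclideanSpace ℝ (Fin d)) : pt x y 1 = y := by simp [pt]

lemma pt_sub (x y : EuclideanSpace ℝ (Fin d)) (a b : ℝ) :
    pt x y b - pt x y a = (b - a) • (y - x) := by
  simp only [pt, sub_smul]; abel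

lemma pt_norm (x y : EuclideanSpace ℝ (Fin d)) {a b : ℝ} (hab : a ≤ b) :
    ‖pt x y a - pt x y b‖ = (b - a) * ‖x - y‖ := by
  rw [show pt x y a - pt x y b = (a - b) • (y - x) from pt_sub x y b a, norm_smul]
  rw [norm_sub_rev y x]
  simp only [Real.norm_eq_abs, abs_of_nonpos (by linarith : a - b ≤ 0)]
  ring

lemma pt_affine (x y : EuclideanSpace ℝ (Fin d)) (a b θ : ℝ) :
    pt x y a + θ • (pt x y b - pt x y a) = pt x y (a + θ * (b - a)) := by
  rw [pt_sub]; simp only [pt, smul_smul, add_smul]; abel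

lemma seg_param {x y : EuclideanSpace ℝ (Fin d)} {a b : ℝ} (hab : a ≤ b)
    {v : EuclideanSpace ℝ (Fin d)} (hv : v ∈ segment ℝ (pt x y a) (pt x y b)) :
    ∃ c, a ≤ c ∧ c ≤ b ∧ v = pt x y c := by
  rw [segment_eq_image'] at hv
  obtain ⟨θ, ⟨hθ0, hθ1⟩, rfl⟩ := hv
  exact ⟨a + θ * (b - a), by nlinarith, by nlinarith, by simpa using pt_affine x y a b θ⟩

lemma pt_mem_segment {x y : EuclideanSpace ℝ (Fin d)} {a b c : ℝ} (hab : a < b)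
    (h1 : a ≤ c) (h2 : c ≤ b) : pt x y c ∈ segment ℝ (pt x y a) (pt x y b) := by
  rw [segment_eq_image']
  refine ⟨(c - a) / (b - a), ⟨div_nonneg (by linarith) (by linarith), by
    rw [div_le_one (by linarith)]; linarith⟩, ?_⟩
  show pt x y a + _ • (pt x y b - pt x y a) = _
  rw [pt_affine, div_mul_cancel₀ _ (by linarith : b - a ≠ 0)]
  norm_num

end Stmt7Aux

namespace Stmt7Aux

variable {d : ℕ} {f : EuclideanSpace ℝ (Fin d) → ℝ} {L0 L1 : ℝ}
  {x y : EuclideanSpace ℝ (Fin d)}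

/-- Local doubling bound. -/
lemma lemA (hL0 : 0 ≤ L0) (hL1 : 0 ≤ L1) (hsm : GenSmooth L0 L1 f)
    (x y : EuclideanSpace ℝ (Fin d)) {t s : ℝ} (hts : t ≤ s)
    (hsmall : L1 * ‖x - y‖ * (s - t) ≤ 1 / 2) :
    ‖gradient f (pt x y s)‖ ≤
      2 * ‖gradient f (pt x y t)‖ + 2 * L0 * ‖x - y‖ * (s - t) := by
  rcases eq_or_lt_of_le hts with rfl | hlt
  · nlinarith [norm_nonneg (gradient f (pt x y t)), norm_nonneg (x - y), mul_nonneg hL0 (norm_nonneg (x - y))]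
  have hr0 : (0:ℝ) ≤ ‖x - y‖ := norm_nonneg _
  -- basic GenSmooth step
  have hGS : ∀ c, t ≤ c → c ≤ s →
      ‖gradient f (pt x y c)‖ ≤ ‖gradient f (pt x y t)‖ +
        (L0 + L1 * ⨆ v ∈ segment ℝ (pt x y t) (pt x y c), ‖gradient f v‖) *
          ((c - t) * ‖x - y‖) := by
    intro c h1 h2
    have h := hsm (pt x y t) (pt x y c)
    rw [pt_norm x y h1] at h
    have h3 : ‖gradient f (pt x y c)‖ - ‖gradient f (pt x y t)‖ ≤
        ‖gradient f (pt x y t) - gradient f (pt x y c)‖ := by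
      rw [norm_sub_rev]; exact norm_sub_norm_le _ _
    linarith
  by_cases hB : BddAbove (Set.range fun v => ⨆ _ : v ∈ segment ℝ (pt x y t) (pt x y s),
      ‖gradient f v‖)
  · set σ := ⨆ v ∈ segment ℝ (pt x y t) (pt x y s), ‖gradient f v‖ with hσ
    have hσ0 : 0 ≤ σ := Real.iSup_nonneg fun v => Real.iSup_nonneg fun _ => norm_nonneg _
    have hmem : ∀ c, t ≤ c → c ≤ s → ‖gradient f (pt x y c)‖ ≤ σ := by
      intro c h1 h2
      have hin : pt x y c ∈ segment ℝ (pt x y t) (pt x y s) := pt_mem_segment hlt h1 h2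
      have hconst : (⨆ _ : pt x y c ∈ segment ℝ (pt x y t) (pt x y s),
          ‖gradient f (pt x y c)‖) = ‖gradient f (pt x y c)‖ := by
        haveI : Nonempty (pt x y c ∈ segment ℝ (pt x y t) (pt x y s)) := ⟨hin⟩
        exact ciSup_const
      rw [← hconst]
      exact le_ciSup hB _
    have hsubJ : ∀ c, t ≤ c → c ≤ s →
        (⨆ v ∈ segment ℝ (pt x y t) (pt x y c), ‖gradient f v‖) ≤ σ := by
      intro c h1 h2
      refine Real.iSup_le (fun v => Real.iSup_le (fun hv => ?_) hσ0) hσ0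
      obtain ⟨c', hc1, hc2, rfl⟩ := seg_param h1 hv
      exact hmem c' hc1 (hc2.trans h2)
    have hstep : ∀ c, t ≤ c → c ≤ s → ‖gradient f (pt x y c)‖ ≤
        ‖gradient f (pt x y t)‖ + (L0 + L1 * σ) * ((s - t) * ‖x - y‖) := by
      intro c h1 h2
      refine (hGS c h1 h2).trans (add_le_add le_rfl ?_)
      have hJ0 : (0:ℝ) ≤ ⨆ v ∈ segment ℝ (pt x y t) (pt x y c), ‖gradient f v‖ :=
        Real.iSup_nonneg fun v => Real.iSup_nonneg fun _ => norm_nonneg _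
      refine mul_le_mul ?_ ?_ (by nlinarith) (by nlinarith)
      · nlinarith [hsubJ c h1 h2]
      · nlinarith
    have hσle : σ ≤ ‖gradient f (pt x y t)‖ + (L0 + L1 * σ) * ((s - t) * ‖x - y‖) := by
      have hpos : (0:ℝ) ≤ ‖gradient f (pt x y t)‖ + (L0 + L1 * σ) * ((s - t) * ‖x - y‖) := by
        have : (0:ℝ) ≤ (L0 + L1 * σ) * ((s - t) * ‖x - y‖) := by
          apply mul_nonneg (by nlinarith) (by nlinarith)
        nlinarith [norm_nonneg (gradient f (pt x y t))]
      rw [hσ]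
      refine Real.iSup_le (fun v => Real.iSup_le (fun hv => ?_) hpos) hpos
      obtain ⟨c, h1, h2, rfl⟩ := seg_param hts hv
      exact hstep c h1 h2
    have hfs : ‖gradient f (pt x y s)‖ ≤ σ := hmem s hts le_rfl
    nlinarith [mul_le_mul_of_nonneg_right hsmall hσ0, mul_nonneg (mul_nonneg hL0 hr0) (by linarith : (0:ℝ) ≤ s - t)]
  · have hJ : (⨆ v ∈ segment ℝ (pt x y t) (pt x y s), ‖gradient f v‖) = 0 :=
      Real.iSup_of_not_bddAbove hB
    have := hGS s hts le_rfl
    rw [hJ] at this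
    nlinarith [norm_nonneg (gradient f (pt x y t)), mul_nonneg (mul_nonneg hL0 hr0) (by linarith : (0:ℝ) ≤ s - t)]

end Stmt7Aux

namespace Stmt7Aux

lemma globalBound {d : ℕ} {f : EuclideanSpace ℝ (Fin d) → ℝ} {L0 L1 : ℝ}
    (hL0 : 0 ≤ L0) (hL1 : 0 ≤ L1) (hsm : GenSmooth L0 L1 f)
    (x y : EuclideanSpace ℝ (Fin d)) :
    ∃ B : ℝ, 0 ≤ B ∧ ∀ t : ℝ, 0 ≤ t → t ≤ 1 → ‖gradient f (pt x y t)‖ ≤ B := by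
  set r := ‖x - y‖ with hr
  have hr0 : (0:ℝ) ≤ r := norm_nonneg _
  obtain ⟨m, hm⟩ := exists_nat_ge (2 * L1 * r)
  set n : ℕ := max 1 m with hn
  have hn1 : (1:ℝ) ≤ (n:ℝ) := by
    have : (1:ℕ) ≤ n := le_max_left _ _
    exact_mod_cast this
  have hn0 : (0:ℝ) < (n:ℝ) := by linarith
  have hnL : 2 * L1 * r ≤ (n:ℝ) := le_trans hm (by exact_mod_cast le_max_right 1 m)
  have hsmall : L1 * r * (1 / (n:ℝ)) ≤ 1 / 2 := by
    rw [mul_one_div, div_le_div_iff₀ hn0 (by norm_num)]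
    linarith
  set e : ℝ := 2 * L0 * r * (1 / (n:ℝ)) with he
  have he0 : 0 ≤ e := by positivity
  set M : ℕ → ℝ := fun k => 2 ^ k * (‖gradient f (pt x y 0)‖ + e) - e with hM
  have hφ0 : (0:ℝ) ≤ ‖gradient f (pt x y 0)‖ := norm_nonneg _
  have P : ∀ k : ℕ, ∀ t : ℝ, 0 ≤ t → t ≤ 1 → t ≤ (k:ℝ) / (n:ℝ) →
      ‖gradient f (pt x y t)‖ ≤ M k := by
    intro k
    induction k with
    | zero =>
      intro t ht0 ht1 htk
      have : t = 0 := le_antisymm (by simpa using htk) ht0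
      subst this
      simp [hM]
    | succ k ih =>
      intro t ht0 ht1 htk
      by_cases hcase : t ≤ (k:ℝ) / (n:ℝ)
      · refine (ih t ht0 ht1 hcase).trans ?_
        have h2k : (0:ℝ) < 2 ^ k := by positivity
        simp only [hM]
        have : (2:ℝ) ^ (k+1) = 2 * 2 ^ k := by ring
        nlinarith
      · push_neg at hcase
        have ht0' : (0:ℝ) ≤ (k:ℝ) / (n:ℝ) := by positivity
        have ht1' : (k:ℝ) / (n:ℝ) ≤ 1 := le_trans hcase.le ht1
        have hdiff : t - (k:ℝ) / (n:ℝ) ≤ 1 / (n:ℝ) := by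
          have h1 : t ≤ ((k:ℝ) + 1) / (n:ℝ) := by push_cast at htk ⊢; exact htk
          have h2 : ((k:ℝ) + 1) / (n:ℝ) - (k:ℝ) / (n:ℝ) = 1 / (n:ℝ) := by ring
          linarith
        have hA := lemA hL0 hL1 hsm x y hcase.le (by
          have h1 : L1 * r * (t - (k:ℝ)/(n:ℝ)) ≤ L1 * r * (1/(n:ℝ)) := by
            apply mul_le_mul_of_nonneg_left hdiff (by positivity)
          linarith)
        rw [← hr] at hA
        refine hA.trans ?_
        have hk := ih ((k:ℝ)/(n:ℝ)) ht0' ht1' le_rfl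
        have hd2 : 2 * L0 * r * (t - (k:ℝ)/(n:ℝ)) ≤ e := by
          rw [he]
          apply mul_le_mul_of_nonneg_left hdiff (by positivity)
        simp only [hM] at hk ⊢
        have h2k : (0:ℝ) < 2 ^ k := by positivity
        have : (2:ℝ) ^ (k+1) = 2 * 2 ^ k := by ring
        nlinarith
  refine ⟨M n, ?_, ?_⟩
  · have := P n 0 le_rfl (by norm_num) (by positivity)
    linarith
  · intro t ht0 ht1
    exact P n t ht0 ht1 (by rw [div_self (ne_of_gt hn0)] at *; exact ht1)

end Stmt7Aux

namespace Stmt7Aux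

variable {d : ℕ} {f : EuclideanSpace ℝ (Fin d) → ℝ} {L0 L1 : ℝ}

lemma stepGS (hsm : GenSmooth L0 L1 f) (x y : EuclideanSpace ℝ (Fin d)) {t c : ℝ}
    (h : t ≤ c) :
    ‖gradient f (pt x y c)‖ ≤ ‖gradient f (pt x y t)‖ +
      (L0 + L1 * ⨆ v ∈ segment ℝ (pt x y t) (pt x y c), ‖gradient f v‖) *
        ((c - t) * ‖x - y‖) := by
  have hh := hsm (pt x y t) (pt x y c)
  rw [pt_norm x y h] at hh
  have h3 : ‖gradient f (pt x y c)‖ - ‖gradient f (pt x y t)‖ ≤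
      ‖gradient f (pt x y t) - gradient f (pt x y c)‖ := by
    rw [norm_sub_rev]; exact norm_sub_norm_le _ _
  linarith

lemma lipGrad (hL0 : 0 ≤ L0) (hL1 : 0 ≤ L1) (hsm : GenSmooth L0 L1 f)
    (x y : EuclideanSpace ℝ (Fin d)) :
    ∃ C : ℝ, 0 ≤ C ∧ (∀ t, 0 ≤ t → t ≤ 1 → ‖gradient f (pt x y t)‖ ≤ C) ∧
      ∀ a b : ℝ, 0 ≤ a → a ≤ b → b ≤ 1 →
        ‖gradient f (pt x y b) - gradient f (pt x y a)‖ ≤ (L0 + L1 * C) * ((b - a) * ‖x - y‖) := by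
  obtain ⟨B, hB0, hB⟩ := globalBound hL0 hL1 hsm x y
  refine ⟨B, hB0, hB, fun a b ha hab hb1 => ?_⟩
  have hJB : (⨆ v ∈ segment ℝ (pt x y a) (pt x y b), ‖gradient f v‖) ≤ B := by
    refine Real.iSup_le (fun v => Real.iSup_le (fun hv => ?_) hB0) hB0
    obtain ⟨c, h1, h2, rfl⟩ := seg_param hab hv
    exact hB c (ha.trans h1) (h2.trans hb1)
  have hh := hsm (pt x y a) (pt x y b)
  rw [pt_norm x y hab, norm_sub_rev] at hh
  refine hh.trans (mul_le_mul_of_nonneg_right ?_ ?_)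
  · nlinarith
  · have : (0:ℝ) ≤ b - a := by linarith
    positivity

lemma contGrad (hL0 : 0 ≤ L0) (hL1 : 0 ≤ L1) (hsm : GenSmooth L0 L1 f)
    (x y : EuclideanSpace ℝ (Fin d)) :
    ContinuousOn (fun t => gradient f (pt x y t)) (Icc (0:ℝ) 1) := by
  obtain ⟨B, hB0, _, hLip⟩ := lipGrad hL0 hL1 hsm x y
  set C : ℝ := (L0 + L1 * B) * ‖x - y‖ with hC
  have hC0 : 0 ≤ C := by positivity
  refine (LipschitzOnWith.of_dist_le_mul (K := Real.toNNReal C) (fun a ha b hb => ?_)).continuousOn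
  rw [Real.coe_toNNReal _ hC0, dist_eq_norm, Real.dist_eq]
  rcases le_total a b with h | h
  · rw [abs_of_nonpos (by linarith), norm_sub_rev]
    have := hLip a b ha.1 h hb.2
    rw [hC]; calc ‖gradient f (pt x y b) - gradient f (pt x y a)‖ ≤
        (L0 + L1 * B) * ((b - a) * ‖x - y‖) := this
      _ = (L0 + L1 * B) * ‖x - y‖ * -(a - b) := by ring
  · rw [abs_of_nonneg (by linarith)]
    have := hLip b a hb.1 h ha.2
    rw [hC]; calc ‖gradient f (pt x y a) - gradient f (pt x y b)‖ ≤
        (L0 + L1 * B) * ((a - b) * ‖x - y‖) := this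
      _ = (L0 + L1 * B) * ‖x - y‖ * (a - b) := by ring

end Stmt7Aux

namespace Stmt7Aux

variable {d : ℕ} {f : EuclideanSpace ℝ (Fin d) → ℝ} {L0 L1 : ℝ}

lemma expBound (hL0 : 0 ≤ L0) (hL1 : 0 ≤ L1) (hsm : GenSmooth L0 L1 f)
    (x y : EuclideanSpace ℝ (Fin d)) (hxy : x ≠ y) :
    ∀ t ∈ Icc (0:ℝ) 1, L0 + L1 * ‖gradient f (pt x y t)‖ ≤
      (L0 + L1 * ‖gradient f (pt x y 0)‖) * Real.exp (L1 * ‖x - y‖) := by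
  set r := ‖x - y‖ with hr
  have hrpos : 0 < r := by rw [hr]; exact norm_sub_pos_iff.mpr hxy
  obtain ⟨B, hB0, hBd, hLip⟩ := lipGrad hL0 hL1 hsm x y
  set φ : ℝ → ℝ := fun t => ‖gradient f (pt x y t)‖ with hφ
  have hφ0 : ∀ t, 0 ≤ φ t := fun t => norm_nonneg _
  have hφcont : ContinuousOn φ (Icc 0 1) :=
    continuous_norm.comp_continuousOn (contGrad hL0 hL1 hsm x y)
  set C : ℝ := (L0 + L1 * B) * r with hC
  have hC0 : 0 ≤ C := by positivity
  set D : ℝ := L1 * C * r with hD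
  have hD0 : 0 ≤ D := by positivity
  -- the liminf slope condition
  have hslope : ∀ t ∈ Ico (0:ℝ) 1, ∀ ρ : ℝ, (L0 + L1 * φ t) * r < ρ →
      ∃ᶠ z in nhdsWithin t (Ioi t), (z - t)⁻¹ * (φ z - φ t) < ρ := by
    intro t ht ρ hρ
    set δ' : ℝ := min (1 - t) ((ρ - (L0 + L1 * φ t) * r) / (D + 1)) with hδ'
    have hδ'pos : 0 < δ' := by
      apply lt_min (by linarith [ht.2])
      apply div_pos (by linarith) (by linarith)
    have hmem : Ioo t (t + δ') ∈ nhdsWithin t (Ioi t) :=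
      Ioo_mem_nhdsGT_of_mem ⟨le_rfl, by linarith⟩
    refine Filter.Eventually.frequently (Filter.eventually_of_mem hmem fun z hz => ?_)
    obtain ⟨hz1, hz2⟩ := hz
    have hzt : 0 < z - t := by linarith
    have hz3 : z ≤ 1 := by
      have : δ' ≤ 1 - t := min_le_left _ _
      linarith
    have hz4 : z - t < (ρ - (L0 + L1 * φ t) * r) / (D + 1) := by
      have : δ' ≤ _ := min_le_right (1 - t) ((ρ - (L0 + L1 * φ t) * r) / (D + 1))
      linarith
    -- bound on the sup over the subsegment
    have hJ : (⨆ v ∈ segment ℝ (pt x y t) (pt x y z), ‖gradient f v‖) ≤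
        φ t + C * (z - t) := by
      have hpos : (0:ℝ) ≤ φ t + C * (z - t) := by
        have := mul_nonneg hC0 hzt.le
        linarith [hφ0 t]
      refine Real.iSup_le (fun v => Real.iSup_le (fun hv => ?_) hpos) hpos
      obtain ⟨c, h1, h2, rfl⟩ := seg_param hz1.le hv
      have hl := hLip t c (ht.1) h1 (h2.trans hz3)
      have h3 : ‖gradient f (pt x y c)‖ - φ t ≤
          ‖gradient f (pt x y c) - gradient f (pt x y t)‖ := norm_sub_norm_le _ _
      have h4 : (L0 + L1 * B) * ((c - t) * r) ≤ C * (z - t) := by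
        rw [hC]
        have h5 : (c - t) * r ≤ (z - t) * r := by
          apply mul_le_mul_of_nonneg_right (by linarith) hrpos.le
        calc (L0 + L1 * B) * ((c - t) * r) ≤ (L0 + L1 * B) * ((z - t) * r) :=
              mul_le_mul_of_nonneg_left h5 (by positivity)
          _ = (L0 + L1 * B) * r * (z - t) := by ring
      linarith
    have hstep : φ z ≤ φ t + (L0 + L1 * ⨆ v ∈ segment ℝ (pt x y t) (pt x y z),
        ‖gradient f v‖) * ((z - t) * r) := stepGS hsm x y hz1.le
    have h2 : L0 + L1 * ⨆ v ∈ segment ℝ (pt x y t) (pt x y z), ‖gradient f v‖ ≤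
        L0 + L1 * φ t + L1 * C * (z - t) := by nlinarith
    have h3 : φ z - φ t ≤ (L0 + L1 * φ t + L1 * C * (z - t)) * ((z - t) * r) := by
      have hJ0 : (0:ℝ) ≤ ⨆ v ∈ segment ℝ (pt x y t) (pt x y z), ‖gradient f v‖ :=
        Real.iSup_nonneg fun v => Real.iSup_nonneg fun _ => norm_nonneg _
      have := mul_le_mul_of_nonneg_right h2 (by positivity : (0:ℝ) ≤ (z - t) * r)
      linarith
    have h4 : (z - t)⁻¹ * (φ z - φ t) ≤ (L0 + L1 * φ t) * r + D * (z - t) := by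
      have h5 : (z - t)⁻¹ * (φ z - φ t) ≤
          (z - t)⁻¹ * ((L0 + L1 * φ t + L1 * C * (z - t)) * ((z - t) * r)) :=
        mul_le_mul_of_nonneg_left h3 (by positivity)
      have h6 : (z - t)⁻¹ * ((L0 + L1 * φ t + L1 * C * (z - t)) * ((z - t) * r)) =
          (L0 + L1 * φ t) * r + L1 * C * r * (z - t) := by
        field_simp
      rw [h6] at h5
      rw [hD]
      linarith
    have h7 : (D + 1) * (z - t) < ρ - (L0 + L1 * φ t) * r := by
      rw [lt_div_iff₀ (by linarith : (0:ℝ) < D + 1)] at hz4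
      linarith [hz4]
    have h8 : D * (z - t) < ρ - (L0 + L1 * φ t) * r := by nlinarith
    linarith
  have hbound : ∀ t ∈ Ico (0:ℝ) 1, (L0 + L1 * φ t) * r ≤ (L1 * r) * φ t + L0 * r :=
    fun t _ => le_of_eq (by ring)
  have hres := le_gronwallBound_of_liminf_deriv_right_le hφcont hslope le_rfl hbound
  intro t ht
  have h9 := hres t ht
  rcases hL1.eq_or_lt with heq | hL1pos
  · rw [← heq]
    simp only [zero_mul, add_zero, Real.exp_zero, mul_one, le_refl]
  · have hK : L1 * r ≠ 0 := by positivity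
    rw [gronwallBound_of_K_ne_0 hK] at h9
    simp only [sub_zero] at h9
    have hdiv : L0 * r / (L1 * r) = L0 / L1 := by
      rw [mul_div_mul_right _ _ (ne_of_gt hrpos)]
    rw [hdiv] at h9
    have hexp1 : Real.exp (L1 * r * t) ≤ Real.exp (L1 * r) := by
      apply Real.exp_le_exp.mpr
      nlinarith [mul_nonneg (mul_nonneg hL1 hrpos.le) (sub_nonneg.mpr ht.2)]
    have hexp0 : (1:ℝ) ≤ Real.exp (L1 * r * t) := by
      apply Real.one_le_exp
      have := ht.1
      positivity
    have h10 : L0 + L1 * φ t ≤ (L0 + L1 * φ 0) * Real.exp (L1 * r * t) := by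
      have h11 := mul_le_mul_of_nonneg_left h9 hL1
      have h13 : L1 * (φ 0 * Real.exp (L1 * r * t) + L0 / L1 * (Real.exp (L1 * r * t) - 1)) =
          L1 * φ 0 * Real.exp (L1 * r * t) + L0 * (Real.exp (L1 * r * t) - 1) := by
        field_simp
      rw [h13] at h11
      nlinarith
    refine h10.trans ?_
    apply mul_le_mul_of_nonneg_left hexp1
    nlinarith [hφ0 0]

end Stmt7Aux

open Stmt7Aux in
/-- Descent inequality for `(L₀, L₁)`-smooth functions:
`f(y) - f(x) - ⟪∇f(x), y - x⟫ ≤ ((L₀ + L₁‖∇f(x)‖)/2) exp(L₁‖x - y‖) ‖x - y‖²`. -/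
theorem stmt_7 (d : ℕ) (f : EuclideanSpace ℝ (Fin d) → ℝ) (L0 L1 : ℝ)
    (hL0 : 0 ≤ L0) (hL1 : 0 ≤ L1) (hf : Differentiable ℝ f) (hsmooth : GenSmooth L0 L1 f) :
    ∀ x y : EuclideanSpace ℝ (Fin d),
      f y - f x - ⟪gradient f x, y - x⟫ ≤
        ((L0 + L1 * ‖gradient f x‖) / 2) * Real.exp (L1 * ‖x - y‖) * ‖x - y‖ ^ 2 := by
  intro x y
  by_cases hxy : x = y
  · subst hxy
    simp
  -- setup
  have hrpos : (0:ℝ) < ‖x - y‖ := norm_sub_pos_iff.mpr hxy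
  set r := ‖x - y‖ with hr
  set φ0 := ‖gradient f x‖ with hφ0
  have hφ00 : 0 ≤ φ0 := norm_nonneg _
  set E0 : ℝ := (L0 + L1 * φ0) * Real.exp (L1 * r) with hE0
  have hexp1 : (1:ℝ) ≤ Real.exp (L1 * r) := Real.one_le_exp (by positivity)
  have hE0L0 : L0 ≤ E0 := by
    nlinarith [mul_nonneg (by positivity : (0:ℝ) ≤ L0 + L1 * φ0)
      (by linarith : (0:ℝ) ≤ Real.exp (L1 * r) - 1)]
  have hE00 : 0 ≤ E0 := le_trans hL0 hE0L0
  have hexp := expBound hL0 hL1 hsmooth x y hxy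
  rw [pt_zero] at hexp
  -- key gradient bound
  have hKey : ∀ t ∈ Set.Icc (0:ℝ) 1, ‖gradient f (pt x y t) - gradient f x‖ ≤ E0 * (t * r) := by
    intro t ht
    have hJE : L0 + L1 * ⨆ v ∈ segment ℝ (pt x y 0) (pt x y t), ‖gradient f v‖ ≤ E0 := by
      rcases hL1.eq_or_lt with heq | hL1pos
      · rw [← heq]; simpa using hE0L0
      · have hq0 : 0 ≤ (E0 - L0) / L1 := div_nonneg (by linarith) hL1pos.le
        have hJ : (⨆ v ∈ segment ℝ (pt x y 0) (pt x y t), ‖gradient f v‖) ≤ (E0 - L0) / L1 := by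
          refine Real.iSup_le (fun v => Real.iSup_le (fun hv => ?_) hq0) hq0
          obtain ⟨c, h1, h2, rfl⟩ := seg_param ht.1 hv
          have := hexp c ⟨h1, h2.trans ht.2⟩
          rw [le_div_iff₀ hL1pos]
          nlinarith
        nlinarith [mul_le_mul_of_nonneg_left hJ (le_of_lt hL1pos),
          mul_div_cancel₀ (E0 - L0) (ne_of_gt hL1pos)]
    have hh := hsmooth (pt x y 0) (pt x y t)
    rw [pt_norm x y ht.1, pt_zero, norm_sub_rev] at hh
    refine hh.trans ?_
    have h1 : (0:ℝ) ≤ (t - 0) * r := mul_nonneg (by linarith [ht.1]) hrpos.le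
    calc (L0 + L1 * ⨆ v ∈ segment ℝ x (pt x y t), ‖gradient f v‖) * ((t - 0) * r) ≤
          E0 * ((t - 0) * r) := by
            refine mul_le_mul_of_nonneg_right ?_ h1
            rw [pt_zero] at hJE
            exact hJE
      _ = E0 * (t * r) := by ring
  -- derivative along the segment
  have hu : ∀ t : ℝ, HasDerivAt (fun s => pt x y s) (y - x) t := by
    intro t
    have h1 : HasDerivAt (fun s : ℝ => s • (y - x)) ((1:ℝ) • (y - x)) t :=
      (hasDerivAt_id t).smul_const (y - x)
    rw [one_smul] at h1
    simpa [pt] using h1.const_add x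
  have hderiv : ∀ t : ℝ,
      HasDerivAt (fun s => f (pt x y s)) ⟪gradient f (pt x y t), y - x⟫ t := by
    intro t
    have hF : HasFDerivAt f
        (InnerProductSpace.toDual ℝ _ (gradient f (pt x y t))) (pt x y t) :=
      (hf (pt x y t)).hasGradientAt.hasFDerivAt
    have := hF.comp_hasDerivAt t (hu t)
    simpa [InnerProductSpace.toDual_apply_apply, Function.comp_def] using this
  -- integrability
  have hcont : ContinuousOn (fun t => ⟪gradient f (pt x y t), y - x⟫) (Set.Icc (0:ℝ) 1) :=
    (contGrad hL0 hL1 hsmooth x y).inner continuousOn_const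
  have hcont' : ContinuousOn (fun t => ⟪gradient f (pt x y t), y - x⟫) (Set.uIcc (0:ℝ) 1) := by
    rw [Set.uIcc_of_le zero_le_one]; exact hcont
  have hint : IntervalIntegrable (fun t => ⟪gradient f (pt x y t), y - x⟫) volume 0 1 :=
    hcont'.intervalIntegrable
  have hFTC : ∫ t in (0:ℝ)..1, ⟪gradient f (pt x y t), y - x⟫ = f y - f x := by
    have h := intervalIntegral.integral_eq_sub_of_hasDerivAt (fun t _ => hderiv t) hint
    rw [pt_one, pt_zero] at h
    exact h
  -- pointwise bound for the integrand
  set q : ℝ := ⟪gradient f x, y - x⟫ with hq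
  have hptw : ∀ t ∈ Set.Icc (0:ℝ) 1,
      ⟪gradient f (pt x y t), y - x⟫ ≤ q + E0 * r ^ 2 * t := by
    intro t ht
    have h1 : ⟪gradient f (pt x y t), y - x⟫ - q =
        ⟪gradient f (pt x y t) - gradient f x, y - x⟫ := by
      rw [hq, inner_sub_left]
    have h2 : ⟪gradient f (pt x y t) - gradient f x, y - x⟫ ≤
        ‖gradient f (pt x y t) - gradient f x‖ * ‖y - x‖ := real_inner_le_norm _ _
    have h3 : ‖y - x‖ = r := by rw [hr, norm_sub_rev]
    have h4 := hKey t ht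
    have h5 : ‖gradient f (pt x y t) - gradient f x‖ * ‖y - x‖ ≤ E0 * (t * r) * r := by
      rw [h3]
      exact mul_le_mul_of_nonneg_right h4 hrpos.le
    have h6 : E0 * (t * r) * r = E0 * r ^ 2 * t := by ring
    linarith
  -- integrate
  have hint3 : IntervalIntegrable (fun t : ℝ => E0 * r ^ 2 * t) volume 0 1 := by
    apply Continuous.intervalIntegrable; fun_prop
  have hint2 : IntervalIntegrable (fun t : ℝ => q + E0 * r ^ 2 * t) volume 0 1 := by
    apply Continuous.intervalIntegrable; fun_prop
  have hmono := intervalIntegral.integral_mono_on zero_le_one hint hint2 hptw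
  have hcomp : ∫ t in (0:ℝ)..1, (q + E0 * r ^ 2 * t) = q + E0 * r ^ 2 / 2 := by
    rw [intervalIntegral.integral_add intervalIntegrable_const hint3]
    rw [intervalIntegral.integral_const]
    have : ∫ t in (0:ℝ)..1, E0 * r ^ 2 * t = E0 * r ^ 2 * ∫ t in (0:ℝ)..1, t :=
      intervalIntegral.integral_const_mul _ _
    rw [this, integral_id]
    norm_num
    ring
  rw [hFTC, hcomp] at hmono
  have hfinal : ((L0 + L1 * φ0) / 2) * Real.exp (L1 * r) * r ^ 2 = E0 * r ^ 2 / 2 := by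
    rw [hE0]; ring
  rw [hfinal]
  linarith
end

section
/- The function f(x) = exp(aᵀx) on R^d, for a fixed vector a ∈ R^d, is (0, ‖a‖)-smooth: for all x, y, ‖∇f(x) - ∇f(y)‖ ≤ ‖a‖ · sup_{u ∈ [x,y]} ‖∇f(u)‖ · ‖x - y‖. Moreover, if a ≠ 0 then f is not L-smooth for any L ≥ 0. -/
open RealInnerProductSpace

lemma grad_exp (d : ℕ) (a x : EuclideanSpace ℝ (Fin d)) :
    HasGradientAt (fun z => Real.exp ⟪a, z⟫) (Real.exp ⟪a, x⟫ • a) x := by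
  rw [hasGradientAt_iff_hasFDerivAt]
  have h1 : HasFDerivAt (fun z : EuclideanSpace ℝ (Fin d) => ⟪a, z⟫) (innerSL ℝ a) x :=
    (innerSL ℝ a).hasFDerivAt
  have h2 := (Real.hasDerivAt_exp (⟪a, x⟫)).comp_hasFDerivAt x h1
  convert h2 using 1
  ext z
  simp [InnerProductSpace.toDual, inner_smul_left, real_inner_comm]
  · rfl
  · ext z
    simp [InnerProductSpace.toDual_apply_apply, inner_smul_left, real_inner_comm]

lemma grad_exp' (d : ℕ) (a x : EuclideanSpace ℝ (Fin d)) :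
    gradient (fun z => Real.exp ⟪a, z⟫) x = Real.exp ⟪a, x⟫ • a :=
  (grad_exp d a x).gradient

-- |e^s - e^t| ≤ e^(max s t) * |s - t|
lemma exp_diff_le (s t : ℝ) : |Real.exp s - Real.exp t| ≤ Real.exp (max s t) * |s - t| := by
  wlog h : t ≤ s generalizing s t
  · have := this t s (le_of_not_ge h)
    rwa [abs_sub_comm (Real.exp t), abs_sub_comm t s, max_comm t s] at this
  rw [abs_of_nonneg (by simp [Real.exp_le_exp, h] : (0:ℝ) ≤ Real.exp s - Real.exp t),
    abs_of_nonneg (by linarith), max_eq_left h]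
  have h1 : Real.exp t ≥ Real.exp s * (1 + (t - s)) := by
    have := Real.add_one_le_exp (t - s)
    calc Real.exp s * (1 + (t - s)) ≤ Real.exp s * Real.exp (t - s) := by
          nlinarith [Real.exp_pos s]
      _ = Real.exp t := by rw [← Real.exp_add]; ring_nf
  nlinarith [Real.exp_pos s]

/-- The function `f(x) = exp(⟪a, x⟫)` is `(0, ‖a‖)`-smooth, and for `a ≠ 0` it is not
`L`-smooth for any `L ≥ 0`. -/
theorem stmt_8 (d : ℕ) (a : EuclideanSpace ℝ (Fin d)) :
    (∀ x y : EuclideanSpace ℝ (Fin d),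
      ‖gradient (fun z => Real.exp ⟪a, z⟫) x - gradient (fun z => Real.exp ⟪a, z⟫) y‖ ≤
        ‖a‖ * (⨆ u ∈ segment ℝ x y, ‖gradient (fun z => Real.exp ⟪a, z⟫) u‖) * ‖x - y‖) ∧
    (a ≠ 0 → ¬ ∃ L : ℝ, 0 ≤ L ∧ ∀ x y : EuclideanSpace ℝ (Fin d),
      ‖gradient (fun z => Real.exp ⟪a, z⟫) x - gradient (fun z => Real.exp ⟪a, z⟫) y‖ ≤
        L * ‖x - y‖) := by
  constructor
  · intro x y
    set s := ⟪a, x⟫ with hs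
    set t := ⟪a, y⟫ with ht
    set M := Real.exp (max s t) * ‖a‖ with hM
    have hM0 : 0 ≤ M := mul_nonneg (Real.exp_pos _).le (norm_nonneg _)
    -- bound on segment
    have hseg : ∀ u ∈ segment ℝ x y, ‖gradient (fun z => Real.exp ⟪a, z⟫) u‖ ≤ M := by
      rintro u ⟨c, e, hc, he, hce, rfl⟩
      rw [grad_exp', norm_smul, Real.norm_eq_abs, abs_of_pos (Real.exp_pos _)]
      have : ⟪a, c • x + e • y⟫ ≤ max s t := by
        rw [inner_add_right, real_inner_smul_right, real_inner_smul_right]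
        calc c * s + e * t ≤ c * max s t + e * max s t := by
              gcongr
              exacts [le_max_left _ _, le_max_right _ _]
          _ = max s t := by rw [← add_mul, hce, one_mul]
      exact mul_le_mul_of_nonneg_right (Real.exp_le_exp.2 this) (norm_nonneg a)
    have hbdd : BddAbove (Set.range fun u : EuclideanSpace ℝ (Fin d) =>
        ⨆ _ : u ∈ segment ℝ x y, ‖gradient (fun z => Real.exp ⟪a, z⟫) u‖) := by
      refine ⟨M, ?_⟩
      rintro _ ⟨u, rfl⟩
      by_cases h : u ∈ segment ℝ x y
      · simp only [ciSup_pos h]; exact hseg u h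
      · haveI : IsEmpty (u ∈ segment ℝ x y) := ⟨fun hh => h hh⟩
        simp only [Real.iSup_of_isEmpty]
        exact hM0
    set S := ⨆ u ∈ segment ℝ x y, ‖gradient (fun z => Real.exp ⟪a, z⟫) u‖ with hS
    have hMS : M ≤ S := by
      rcases le_total s t with h | h
      · calc M = ‖gradient (fun z => Real.exp ⟪a, z⟫) y‖ := by
              rw [grad_exp', norm_smul, Real.norm_eq_abs, abs_of_pos (Real.exp_pos _),
                hM, max_eq_right h]
          _ = ⨆ _ : y ∈ segment ℝ x y, ‖gradient (fun z => Real.exp ⟪a, z⟫) y‖ := by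
              rw [ciSup_pos (right_mem_segment ℝ x y)]
          _ ≤ S := le_ciSup hbdd y
      · calc M = ‖gradient (fun z => Real.exp ⟪a, z⟫) x‖ := by
              rw [grad_exp', norm_smul, Real.norm_eq_abs, abs_of_pos (Real.exp_pos _),
                hM, max_eq_left h]
          _ = ⨆ _ : x ∈ segment ℝ x y, ‖gradient (fun z => Real.exp ⟪a, z⟫) x‖ := by
              rw [ciSup_pos (left_mem_segment ℝ x y)]
          _ ≤ S := le_ciSup hbdd x
    have key : ‖gradient (fun z => Real.exp ⟪a, z⟫) x - gradient (fun z => Real.exp ⟪a, z⟫) y‖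
        ≤ ‖a‖ * M * ‖x - y‖ := by
      rw [grad_exp', grad_exp', ← sub_smul, norm_smul, Real.norm_eq_abs]
      have h1 := exp_diff_le s t
      have h2 : |s - t| ≤ ‖a‖ * ‖x - y‖ := by
        have : s - t = ⟪a, x - y⟫ := by rw [inner_sub_right]
        rw [this]
        exact abs_real_inner_le_norm a (x - y)
      calc |Real.exp s - Real.exp t| * ‖a‖
          ≤ (Real.exp (max s t) * (‖a‖ * ‖x - y‖)) * ‖a‖ := by
            refine mul_le_mul_of_nonneg_right (h1.trans ?_) (norm_nonneg a)
            exact mul_le_mul_of_nonneg_left h2 (Real.exp_pos _).le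
        _ = ‖a‖ * M * ‖x - y‖ := by rw [hM]; ring
    calc _ ≤ ‖a‖ * M * ‖x - y‖ := key
      _ ≤ ‖a‖ * S * ‖x - y‖ := by
          gcongr
  · rintro ha ⟨L, hL0, hL⟩
    have hna : 0 < ‖a‖ := norm_pos_iff.2 ha
    set c := ‖a‖ ^ 2 with hc
    have hc0 : 0 < c := by positivity
    set t := (4 * L + 4) / c ^ 2 with htdef
    have ht0 : 0 < t := by positivity
    have hinner : ⟪a, t • a⟫ = t * c := by
      rw [real_inner_smul_right, real_inner_self_eq_norm_sq]
    have h := hL (t • a) 0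
    rw [grad_exp', grad_exp', hinner, inner_zero_right, Real.exp_zero, ← sub_smul, sub_zero,
      norm_smul, norm_smul, Real.norm_eq_abs, Real.norm_eq_abs] at h
    have htc : 0 ≤ t * c := by positivity
    have hexp : Real.exp (t * c) - 1 ≥ t * c + (t * c) ^ 2 / 4 := by
      have h1 : 1 + t * c / 2 ≤ Real.exp (t * c / 2) := by
        have := Real.add_one_le_exp (t * c / 2); linarith
      have h2 : Real.exp (t * c / 2) * Real.exp (t * c / 2) = Real.exp (t * c) := by
        rw [← Real.exp_add]; ring_nf
      nlinarith [Real.exp_pos (t * c / 2)]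
    have habs1 : |Real.exp (t * c) - 1| = Real.exp (t * c) - 1 := by
      rw [abs_of_nonneg]; nlinarith [Real.add_one_le_exp (t * c)]
    have habs2 : |t| = t := abs_of_pos ht0
    rw [habs1, habs2] at h
    have h2 : (Real.exp (t * c) - 1) * ‖a‖ ≤ (L * t) * ‖a‖ := by rw [mul_assoc]; exact h
    have h' : Real.exp (t * c) - 1 ≤ L * t := le_of_mul_le_mul_right h2 hna
    have hquad : (t * c) ^ 2 / 4 = t * (L + 1) := by
      rw [htdef]; field_simp
    have hq2 : t * (L + 1) = L * t + t := by ring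
    linarith
end

section
/- The logistic function f(x) = log(1 + exp(-aᵀx)) on R^d, for a fixed a ∈ R^d, is (0, ‖a‖)-smooth: for all x, y, ‖∇f(x) - ∇f(y)‖ ≤ ‖a‖ · sup_{u∈[x,y]} ‖∇f(u)‖ · ‖x - y‖. -/
open RealInnerProductSpace

noncomputable def sig (t : ℝ) : ℝ := Real.exp (-t) / (1 + Real.exp (-t))

lemma denom_pos (t : ℝ) : 0 < 1 + Real.exp (-t) := by positivity

lemma sig_nonneg (t : ℝ) : 0 ≤ sig t := div_nonneg (Real.exp_nonneg _) (denom_pos t).le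

lemma sig_le_one (t : ℝ) : sig t ≤ 1 :=
  div_le_one_of_le₀ (by linarith) (denom_pos t).le

lemma hasDerivAt_denom (t : ℝ) :
    HasDerivAt (fun t => 1 + Real.exp (-t)) (-Real.exp (-t)) t := by
  simpa using ((Real.hasDerivAt_exp (-t)).comp t (hasDerivAt_neg t)).const_add 1

lemma hasDerivAt_L (t : ℝ) :
    HasDerivAt (fun t => Real.log (1 + Real.exp (-t))) (-sig t) t := by
  have h := (hasDerivAt_denom t).log (denom_pos t).ne'
  simpa [sig, neg_div] using h

lemma hasDerivAt_neg_exp (t : ℝ) :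
    HasDerivAt (fun t => Real.exp (-t)) (-Real.exp (-t)) t := by
  exact ((Real.hasDerivAt_exp (-t)).comp t (hasDerivAt_neg t)).congr_deriv (by simp)

lemma hasDerivAt_sig (t : ℝ) :
    HasDerivAt sig (-(Real.exp (-t) / (1 + Real.exp (-t)) ^ 2)) t := by
  have h := (hasDerivAt_neg_exp t).div (hasDerivAt_denom t) (denom_pos t).ne'
  refine h.congr_deriv ?_
  have := (denom_pos t).ne'
  field_simp
  ring

lemma abs_sig_deriv_le (t : ℝ) :
    |(-(Real.exp (-t) / (1 + Real.exp (-t)) ^ 2))| ≤ sig t := by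
  rw [abs_neg, abs_of_nonneg (by positivity)]
  unfold sig
  gcongr
  nlinarith [Real.exp_pos (-t)]

section grad

variable {d : ℕ} (a : EuclideanSpace ℝ (Fin d))

lemma hasGradientAt_f (z : EuclideanSpace ℝ (Fin d)) :
    HasGradientAt (fun z : EuclideanSpace ℝ (Fin d) => Real.log (1 + Real.exp (-⟪a, z⟫)))
      ((-sig ⟪a, z⟫) • a) z := by
  rw [hasGradientAt_iff_hasFDerivAt]
  have h1 : HasFDerivAt (fun z : EuclideanSpace ℝ (Fin d) => ⟪a, z⟫)
      (InnerProductSpace.toDual ℝ _ a) z := (InnerProductSpace.toDual ℝ _ a).hasFDerivAt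
  have h2 := (hasDerivAt_L ⟪a, z⟫).comp_hasFDerivAt z h1
  refine h2.congr_fderiv ?_
  ext v
  simp [InnerProductSpace.toDual_apply_apply, real_inner_smul_left]

end grad

/-- The logistic function `f(x) = log(1 + exp(-⟪a, x⟫))` is `(0, ‖a‖)`-smooth. -/
theorem stmt_9 (d : ℕ) (a : EuclideanSpace ℝ (Fin d)) :
    ∀ x y : EuclideanSpace ℝ (Fin d),
      ‖gradient (fun z => Real.log (1 + Real.exp (-⟪a, z⟫))) x -
        gradient (fun z => Real.log (1 + Real.exp (-⟪a, z⟫))) y‖ ≤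
        ‖a‖ * (⨆ u ∈ segment ℝ x y,
          ‖gradient (fun z => Real.log (1 + Real.exp (-⟪a, z⟫))) u‖) * ‖x - y‖ := by
  intro x y
  have hgrad : ∀ z, gradient (fun z : EuclideanSpace ℝ (Fin d) =>
      Real.log (1 + Real.exp (-⟪a, z⟫))) z = (-sig ⟪a, z⟫) • a :=
    fun z => (hasGradientAt_f a z).gradient
  set S := ⨆ u ∈ segment ℝ x y,
    ‖gradient (fun z : EuclideanSpace ℝ (Fin d) => Real.log (1 + Real.exp (-⟪a, z⟫))) u‖ with hS
  have hnorm : ∀ z, ‖gradient (fun z : EuclideanSpace ℝ (Fin d) =>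
      Real.log (1 + Real.exp (-⟪a, z⟫))) z‖ = sig ⟪a, z⟫ * ‖a‖ := by
    intro z
    rw [hgrad z, norm_smul, Real.norm_eq_abs, abs_neg, abs_of_nonneg (sig_nonneg _)]
  have hbdd : BddAbove (Set.range fun u : EuclideanSpace ℝ (Fin d) =>
      ⨆ _ : u ∈ segment ℝ x y,
        ‖gradient (fun z : EuclideanSpace ℝ (Fin d) => Real.log (1 + Real.exp (-⟪a, z⟫))) u‖) := by
    refine ⟨‖a‖, ?_⟩
    rintro _ ⟨u, rfl⟩
    by_cases hu : u ∈ segment ℝ x y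
    · simp only [ciSup_pos hu, hnorm]
      calc sig ⟪a, u⟫ * ‖a‖ ≤ 1 * ‖a‖ := by
            exact mul_le_mul_of_nonneg_right (sig_le_one _) (norm_nonneg a)
        _ = ‖a‖ := one_mul _
    · simp [hu, Real.iSup_of_isEmpty, norm_nonneg]
  have hleS : ∀ u ∈ segment ℝ x y,
      ‖gradient (fun z : EuclideanSpace ℝ (Fin d) => Real.log (1 + Real.exp (-⟪a, z⟫))) u‖ ≤ S := by
    intro u hu
    rw [hS, ← ciSup_pos (f := fun _ : u ∈ segment ℝ x y =>
      ‖gradient (fun z : EuclideanSpace ℝ (Fin d) => Real.log (1 + Real.exp (-⟪a, z⟫))) u‖) hu]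
    exact le_ciSup hbdd u
  have hS0 : 0 ≤ S :=
    le_trans (norm_nonneg _) (hleS x (left_mem_segment ℝ x y))
  by_cases ha : a = 0
  · rw [hgrad x, hgrad y, ha]
    simp
  have hanorm : 0 < ‖a‖ := norm_pos_iff.mpr ha
  -- sigma bound on the real segment
  have hsegbound : ∀ t ∈ segment ℝ (⟪a, x⟫ : ℝ) ⟪a, y⟫, sig t ≤ S / ‖a‖ := by
    intro t ht
    obtain ⟨α, β, hα, hβ, hαβ, hsum⟩ := ht
    set u : EuclideanSpace ℝ (Fin d) := α • x + β • y with hu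
    have hu_mem : u ∈ segment ℝ x y := ⟨α, β, hα, hβ, hαβ, rfl⟩
    have htu : ⟪a, u⟫ = t := by
      simp only [hu, inner_add_right, real_inner_smul_right]
      simpa [smul_eq_mul] using hsum
    rw [le_div_iff₀ hanorm, ← htu, ← hnorm]
    exact hleS u hu_mem
  -- mean value theorem
  have hmvt : ‖sig ⟪a, y⟫ - sig ⟪a, x⟫‖ ≤ (S / ‖a‖) * ‖(⟪a, y⟫ : ℝ) - ⟪a, x⟫‖ := by
    apply (convex_segment (⟪a, x⟫ : ℝ) ⟪a, y⟫).norm_image_sub_le_of_norm_hasDerivWithin_le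
      (f' := fun t => -(Real.exp (-t) / (1 + Real.exp (-t)) ^ 2))
      (fun t _ => (hasDerivAt_sig t).hasDerivWithinAt)
      (fun t ht => le_trans (abs_sig_deriv_le t) (hsegbound t ht))
      (left_mem_segment ℝ _ _) (right_mem_segment ℝ _ _)
  have hinner : ‖(⟪a, y⟫ : ℝ) - ⟪a, x⟫‖ ≤ ‖a‖ * ‖x - y‖ := by
    rw [Real.norm_eq_abs, ← inner_sub_right]
    calc |⟪a, y - x⟫| ≤ ‖a‖ * ‖y - x‖ := abs_real_inner_le_norm a (y - x)
      _ = ‖a‖ * ‖x - y‖ := by rw [norm_sub_rev]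
  calc ‖gradient (fun z : EuclideanSpace ℝ (Fin d) => Real.log (1 + Real.exp (-⟪a, z⟫))) x -
        gradient (fun z : EuclideanSpace ℝ (Fin d) => Real.log (1 + Real.exp (-⟪a, z⟫))) y‖
      = ‖sig ⟪a, y⟫ - sig ⟪a, x⟫‖ * ‖a‖ := by
        rw [hgrad, hgrad, ← sub_smul, neg_sub_neg, norm_smul]
    _ ≤ ((S / ‖a‖) * ‖(⟪a, y⟫ : ℝ) - ⟪a, x⟫‖) * ‖a‖ :=
        mul_le_mul_of_nonneg_right hmvt (norm_nonneg a)
    _ = S * ‖(⟪a, y⟫ : ℝ) - ⟪a, x⟫‖ := by field_simp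
    _ ≤ S * (‖a‖ * ‖x - y‖) := mul_le_mul_of_nonneg_left hinner hS0
    _ = ‖a‖ * S * ‖x - y‖ := by ring
end

section
/- The function f(x) = ‖x‖^{2n} on R^d, for a positive integer n, is convex and (2n, 2n-1)-smooth, and for n ≥ 2 it is not L-smooth for any L ≥ 0. -/
open RealInnerProductSpace

private lemma abs_pow_sub_pow_le' (M : ℝ) (hM : 0 ≤ M) :
    ∀ (k : ℕ) (a b : ℝ), 0 ≤ a → 0 ≤ b → a ≤ M → b ≤ M →
      |a ^ k - b ^ k| ≤ (k : ℝ) * M ^ (k - 1) * |a - b| := by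
  intro k
  induction k with
  | zero => intro a b _ _ _ _; simp
  | succ m ih =>
    intro a b ha hb haM hbM
    have h2 : |a ^ (m + 1) - b ^ (m + 1)| ≤ a * |a ^ m - b ^ m| + |a - b| * b ^ m := by
      have h1 : a ^ (m + 1) - b ^ (m + 1) = a * (a ^ m - b ^ m) + (a - b) * b ^ m := by ring
      rw [h1]
      refine (abs_add_le _ _).trans ?_
      rw [abs_mul, abs_mul, abs_of_nonneg ha, abs_of_nonneg (pow_nonneg hb m)]
    have h3 := ih a b ha hb haM hbM
    have hbm : b ^ m ≤ M ^ m := pow_le_pow_left₀ hb hbM m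
    have hq : (m : ℝ) * M ^ (m - 1) * M ≤ (m : ℝ) * M ^ m := by
      cases m with
      | zero => simp
      | succ l =>
        rw [Nat.succ_sub_one, mul_assoc, ← pow_succ]
    have hsub : (m + 1 : ℕ) - 1 = m := rfl
    rw [hsub]
    have ha' : a * |a ^ m - b ^ m| ≤ M * ((m : ℝ) * M ^ (m - 1) * |a - b|) :=
      mul_le_mul haM h3 (abs_nonneg _) hM
    have hb' : |a - b| * b ^ m ≤ |a - b| * M ^ m :=
      mul_le_mul_of_nonneg_left hbm (abs_nonneg _)
    push_cast
    nlinarith [abs_nonneg (a - b), pow_nonneg hM m]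

private lemma key_scalar (k : ℕ) (M : ℝ) (hM : 0 ≤ M) :
    ((k : ℝ) + 1) * M ^ k ≤ 1 + ((k : ℝ) + 1) * M ^ (k + 1) := by
  rcases le_or_gt M 1 with h | h
  · set s := 1 - M with hs
    have hs0 : 0 ≤ s := by simp [hs]; linarith
    have hs1 : s ≤ 1 := by simp [hs]; linarith
    have hber : 1 + (k : ℝ) * s ≤ (1 + s) ^ k := one_add_mul_le_pow (by linarith) k
    have h2 : ((k : ℝ) + 1) * s ≤ (1 + s) ^ k := by nlinarith
    have hMs : M = 1 - s := by rw [hs]; ring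
    have hfin : ((k : ℝ) + 1) * s * M ^ k ≤ 1 := by
      have hstep : ((k : ℝ) + 1) * s * M ^ k ≤ (1 + s) ^ k * (1 - s) ^ k := by
        rw [hMs]
        exact mul_le_mul h2 le_rfl (pow_nonneg (by linarith) k) (pow_nonneg (by linarith) k)
      have h1 : ((1 + s) * (1 - s)) ^ k ≤ 1 := by
        apply pow_le_one₀ <;> nlinarith
      rw [← mul_pow] at hstep
      linarith
    have hpow : M ^ (k + 1) = M ^ k * M := pow_succ M k
    have hexp : ((k : ℝ) + 1) * s * M ^ k = ((k : ℝ) + 1) * M ^ k - ((k : ℝ) + 1) * (M ^ k * M) := by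
      rw [hs]; ring
    rw [hpow]
    linarith [hfin]
  · have hMk : M ^ k ≤ M ^ (k + 1) := pow_le_pow_right₀ h.le (Nat.le_succ k)
    nlinarith [pow_nonneg hM k]

private lemma hasGradientAt_norm_pow (d n : ℕ) (hn : 0 < n) (x : EuclideanSpace ℝ (Fin d)) :
    HasGradientAt (fun z : EuclideanSpace ℝ (Fin d) => ‖z‖ ^ (2 * n))
      (((2 * n : ℝ) * ‖x‖ ^ (2 * n - 2)) • x) x := by
  have h1 : HasFDerivAt (fun z : EuclideanSpace ℝ (Fin d) => ‖z‖ ^ 2)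
      (2 • (innerSL ℝ x)) x := (hasStrictFDerivAt_norm_sq x).hasFDerivAt
  have h2 : HasDerivAt (fun t : ℝ => t ^ n) ((n : ℝ) * (‖x‖ ^ 2) ^ (n - 1)) (‖x‖ ^ 2) :=
    hasDerivAt_pow n _
  have h3 := h2.comp_hasFDerivAt x h1
  have hfun : (fun z : EuclideanSpace ℝ (Fin d) => ‖z‖ ^ (2 * n)) =
      (fun t : ℝ => t ^ n) ∘ (fun z : EuclideanSpace ℝ (Fin d) => ‖z‖ ^ 2) := by
    funext z
    simp only [Function.comp_apply, ← pow_mul]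
  rw [hasGradientAt_iff_hasFDerivAt, hfun]
  convert h3 using 1
  · rfl
  ext y
  have hexp : (‖x‖ : ℝ) ^ (2 * n - 2) = (‖x‖ ^ 2) ^ (n - 1) := by
    rw [← pow_mul]
    congr 1
    omega
  simp only [InnerProductSpace.toDual_apply_apply, real_inner_smul_left,
    ContinuousLinearMap.smul_apply, ContinuousLinearMap.coe_smul', Pi.smul_apply,
    innerSL_apply_apply, smul_eq_mul]
  rw [hexp]
  ring

private lemma gradient_norm_pow (d n : ℕ) (hn : 0 < n) (x : EuclideanSpace ℝ (Fin d)) :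
    gradient (fun z : EuclideanSpace ℝ (Fin d) => ‖z‖ ^ (2 * n)) x
      = ((2 * n : ℝ) * ‖x‖ ^ (2 * n - 2)) • x :=
  (hasGradientAt_norm_pow d n hn x).gradient

private lemma norm_gradient_norm_pow (d n : ℕ) (hn : 0 < n) (x : EuclideanSpace ℝ (Fin d)) :
    ‖gradient (fun z : EuclideanSpace ℝ (Fin d) => ‖z‖ ^ (2 * n)) x‖
      = (2 * n : ℝ) * ‖x‖ ^ (2 * n - 1) := by
  rw [gradient_norm_pow d n hn x, norm_smul, Real.norm_eq_abs,
    abs_of_nonneg (by positivity), mul_assoc, ← pow_succ]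
  congr 2
  omega

/-- The function `f(x) = ‖x‖^(2n)` is convex and `(2n, 2n-1)`-smooth, and for `n ≥ 2`
(and `d ≥ 1`) it is not `L`-smooth for any `L ≥ 0`. -/
theorem stmt_10 (d n : ℕ) (hd : 0 < d) (hn : 0 < n) :
    ConvexOn ℝ Set.univ (fun x : EuclideanSpace ℝ (Fin d) => ‖x‖ ^ (2 * n)) ∧
    (∀ x y : EuclideanSpace ℝ (Fin d),
      ‖gradient (fun z : EuclideanSpace ℝ (Fin d) => ‖z‖ ^ (2 * n)) x -
        gradient (fun z : EuclideanSpace ℝ (Fin d) => ‖z‖ ^ (2 * n)) y‖ ≤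
        ((2 * n : ℝ) + (2 * n - 1 : ℝ) *
          ⨆ u ∈ segment ℝ x y,
            ‖gradient (fun z : EuclideanSpace ℝ (Fin d) => ‖z‖ ^ (2 * n)) u‖) * ‖x - y‖) ∧
    (2 ≤ n → ¬ ∃ L : ℝ, 0 ≤ L ∧ ∀ x y : EuclideanSpace ℝ (Fin d),
      ‖gradient (fun z : EuclideanSpace ℝ (Fin d) => ‖z‖ ^ (2 * n)) x -
        gradient (fun z : EuclideanSpace ℝ (Fin d) => ‖z‖ ^ (2 * n)) y‖ ≤ L * ‖x - y‖) := by
  have he : ‖(EuclideanSpace.single (⟨0, hd⟩ : Fin d) (1 : ℝ) :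
      EuclideanSpace ℝ (Fin d))‖ = 1 := by
    rw [EuclideanSpace.norm_single, norm_one]
  refine ⟨?_, ?_, ?_⟩
  · -- convexity
    have himg : ((fun z : EuclideanSpace ℝ (Fin d) => ‖z‖) '' Set.univ) = Set.Ici 0 := by
      ext r
      constructor
      · rintro ⟨z, -, rfl⟩; exact norm_nonneg z
      · intro hr
        refine ⟨r • (EuclideanSpace.single (⟨0, hd⟩ : Fin d) (1 : ℝ)), trivial, ?_⟩
        show ‖r • (EuclideanSpace.single (⟨0, hd⟩ : Fin d) (1 : ℝ))‖ = r
        rw [norm_smul, Real.norm_eq_abs, abs_of_nonneg hr, he, mul_one]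
    have hg : ConvexOn ℝ ((fun z : EuclideanSpace ℝ (Fin d) => ‖z‖) '' Set.univ)
        (fun t : ℝ => t ^ (2 * n)) :=
      (Even.convexOn_pow (even_two_mul n)).subset (Set.subset_univ _)
        (by rw [himg]; exact convex_Ici 0)
    have hmono : MonotoneOn (fun t : ℝ => t ^ (2 * n))
        ((fun z : EuclideanSpace ℝ (Fin d) => ‖z‖) '' Set.univ) := by
      rw [himg]
      intro a ha b _ hab
      exact pow_le_pow_left₀ ha hab _
    exact hg.comp convexOn_univ_norm hmono
  · -- smoothness
    intro x y
    have hgx := gradient_norm_pow d n hn x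
    have hgy := gradient_norm_pow d n hn y
    simp only [norm_gradient_norm_pow d n hn]
    rw [hgx, hgy]
    set p : ℕ := 2 * n - 2 with hp
    have hp1 : p + 1 = 2 * n - 1 := by omega
    set M : ℝ := max ‖x‖ ‖y‖ with hM
    have hM0 : (0 : ℝ) ≤ M := le_trans (norm_nonneg x) (le_max_left _ _)
    have hseg : ∀ u ∈ segment ℝ x y, ‖u‖ ≤ M := by
      rintro u ⟨s, t, hs, ht, hst, rfl⟩
      calc ‖s • x + t • y‖ ≤ ‖s • x‖ + ‖t • y‖ := norm_add_le _ _
        _ = s * ‖x‖ + t * ‖y‖ := by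
            rw [norm_smul, norm_smul, Real.norm_eq_abs, Real.norm_eq_abs,
              abs_of_nonneg hs, abs_of_nonneg ht]
        _ ≤ s * M + t * M := by
            exact add_le_add (mul_le_mul_of_nonneg_left (le_max_left _ _) hs)
              (mul_le_mul_of_nonneg_left (le_max_right _ _) ht)
        _ = M := by rw [← add_mul, hst, one_mul]
    set S : ℝ := ⨆ u ∈ segment ℝ x y, (2 * (n : ℝ)) * ‖u‖ ^ (2 * n - 1) with hS
    have hboundeach : ∀ u : EuclideanSpace ℝ (Fin d),
        (⨆ _ : u ∈ segment ℝ x y, (2 * (n : ℝ)) * ‖u‖ ^ (2 * n - 1)) ≤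
          2 * (n : ℝ) * M ^ (2 * n - 1) := by
      intro u
      refine Real.iSup_le (fun hu => ?_) (by positivity)
      exact mul_le_mul_of_nonneg_left
        (pow_le_pow_left₀ (norm_nonneg u) (hseg u hu) _) (by positivity)
    have hbdd : BddAbove (Set.range fun u : EuclideanSpace ℝ (Fin d) =>
        ⨆ _ : u ∈ segment ℝ x y, (2 * (n : ℝ)) * ‖u‖ ^ (2 * n - 1)) := by
      refine ⟨2 * (n : ℝ) * M ^ (2 * n - 1), ?_⟩
      rintro r ⟨u, rfl⟩
      exact hboundeach u
    have hSx : (2 * (n : ℝ)) * ‖x‖ ^ (2 * n - 1) ≤ S := by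
      have h := le_ciSup hbdd x
      rwa [ciSup_pos (left_mem_segment ℝ x y)] at h
    have hSy : (2 * (n : ℝ)) * ‖y‖ ^ (2 * n - 1) ≤ S := by
      have h := le_ciSup hbdd y
      rwa [ciSup_pos (right_mem_segment ℝ x y)] at h
    have hSM : (2 * (n : ℝ)) * M ^ (2 * n - 1) ≤ S := by
      rcases max_cases ‖x‖ ‖y‖ with ⟨hmax, -⟩ | ⟨hmax, -⟩
      · rw [hM, hmax]; exact hSx
      · rw [hM, hmax]; exact hSy
    -- key vector bound
    have habs : |‖x‖ ^ p - ‖y‖ ^ p| ≤ (p : ℝ) * M ^ (p - 1) * ‖x - y‖ := by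
      refine le_trans (abs_pow_sub_pow_le' M hM0 p ‖x‖ ‖y‖ (norm_nonneg x) (norm_nonneg y)
        (le_max_left _ _) (le_max_right _ _)) ?_
      exact mul_le_mul_of_nonneg_left (abs_norm_sub_norm_le x y) (by positivity)
    have hq : (p : ℝ) * M ^ (p - 1) * M ≤ (p : ℝ) * M ^ p := by
      cases p with
      | zero => simp
      | succ l => rw [Nat.succ_sub_one, mul_assoc, ← pow_succ]
    have hdecomp : ((2 * n : ℝ) * ‖x‖ ^ p) • x - ((2 * n : ℝ) * ‖y‖ ^ p) • y =
        ((2 * n : ℝ) * ‖x‖ ^ p) • (x - y) +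
          ((2 * n : ℝ) * ‖x‖ ^ p - (2 * n : ℝ) * ‖y‖ ^ p) • y := by
      rw [smul_sub, sub_smul]; abel
    have hkey : ‖((2 * n : ℝ) * ‖x‖ ^ p) • x - ((2 * n : ℝ) * ‖y‖ ^ p) • y‖ ≤
        2 * (n : ℝ) * ((p : ℝ) + 1) * M ^ p * ‖x - y‖ := by
      rw [hdecomp]
      have h1 : ‖((2 * n : ℝ) * ‖x‖ ^ p) • (x - y)‖ ≤
          2 * (n : ℝ) * M ^ p * ‖x - y‖ := by
        rw [norm_smul, Real.norm_eq_abs, abs_of_nonneg (by positivity)]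
        have hxp : ‖x‖ ^ p ≤ M ^ p := pow_le_pow_left₀ (norm_nonneg x) (le_max_left _ _) p
        have := mul_le_mul_of_nonneg_right
          (mul_le_mul_of_nonneg_left hxp (by positivity : (0:ℝ) ≤ 2 * (n:ℝ)))
          (norm_nonneg (x - y))
        linarith
      have h2 : ‖((2 * n : ℝ) * ‖x‖ ^ p - (2 * n : ℝ) * ‖y‖ ^ p) • y‖ ≤
          2 * (n : ℝ) * ((p : ℝ) * M ^ p) * ‖x - y‖ := by
        rw [norm_smul, Real.norm_eq_abs]
        have habs2 : |(2 * n : ℝ) * ‖x‖ ^ p - (2 * n : ℝ) * ‖y‖ ^ p| =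
            2 * (n : ℝ) * |‖x‖ ^ p - ‖y‖ ^ p| := by
          rw [← mul_sub, abs_mul, abs_of_nonneg (by positivity : (0:ℝ) ≤ (2 * n : ℝ))]
        rw [habs2]
        have hyM : ‖y‖ ≤ M := le_max_right _ _
        calc 2 * (n : ℝ) * |‖x‖ ^ p - ‖y‖ ^ p| * ‖y‖
            ≤ 2 * (n : ℝ) * ((p : ℝ) * M ^ (p - 1) * ‖x - y‖) * M := by
              refine mul_le_mul ?_ hyM (norm_nonneg y) (by positivity)
              exact mul_le_mul_of_nonneg_left habs (by positivity)
          _ = 2 * (n : ℝ) * ((p : ℝ) * M ^ (p - 1) * M) * ‖x - y‖ := by ring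
          _ ≤ 2 * (n : ℝ) * ((p : ℝ) * M ^ p) * ‖x - y‖ := by
              refine mul_le_mul_of_nonneg_right
                (mul_le_mul_of_nonneg_left hq (by positivity)) (norm_nonneg _)
      calc ‖((2 * n : ℝ) * ‖x‖ ^ p) • (x - y) +
            ((2 * n : ℝ) * ‖x‖ ^ p - (2 * n : ℝ) * ‖y‖ ^ p) • y‖
          ≤ ‖((2 * n : ℝ) * ‖x‖ ^ p) • (x - y)‖ +
            ‖((2 * n : ℝ) * ‖x‖ ^ p - (2 * n : ℝ) * ‖y‖ ^ p) • y‖ := norm_add_le _ _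
        _ ≤ 2 * (n : ℝ) * M ^ p * ‖x - y‖ +
            2 * (n : ℝ) * ((p : ℝ) * M ^ p) * ‖x - y‖ := add_le_add h1 h2
        _ = 2 * (n : ℝ) * ((p : ℝ) + 1) * M ^ p * ‖x - y‖ := by ring
    -- scalar comparison with the sup
    have hps : ((p : ℝ) + 1) = 2 * (n : ℝ) - 1 := by
      rw [hp, Nat.cast_sub (by omega : 2 ≤ 2 * n)]
      push_cast
      ring
    have hMp1 : M ^ (p + 1) = M ^ (2 * n - 1) := by rw [hp1]
    have hks := key_scalar p M hM0
    have hchain : 2 * (n : ℝ) * ((p : ℝ) + 1) * M ^ p ≤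
        2 * (n : ℝ) + (2 * (n : ℝ) - 1) * S := by
      have hmul := mul_le_mul_of_nonneg_left hks (by positivity : (0:ℝ) ≤ 2 * (n : ℝ))
      have hSM' : (2 * (n : ℝ)) * M ^ (p + 1) ≤ S := by rw [hMp1]; exact hSM
      have hn1 : (1 : ℝ) ≤ (n : ℝ) := by exact_mod_cast hn
      have hprod := mul_le_mul_of_nonneg_left hSM'
        (by linarith : (0:ℝ) ≤ 2 * (n : ℝ) - 1)
      rw [hps] at hmul ⊢
      linarith
    calc ‖((2 * n : ℝ) * ‖x‖ ^ p) • x - ((2 * n : ℝ) * ‖y‖ ^ p) • y‖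
        ≤ 2 * (n : ℝ) * ((p : ℝ) + 1) * M ^ p * ‖x - y‖ := hkey
      _ ≤ (2 * (n : ℝ) + (2 * (n : ℝ) - 1) * S) * ‖x - y‖ :=
          mul_le_mul_of_nonneg_right hchain (norm_nonneg _)
      _ = ((2 * n : ℝ) + (2 * n - 1 : ℝ) * S) * ‖x - y‖ := by push_cast; ring
  · -- not L-smooth
    intro hn2
    rintro ⟨L, hL0, hL⟩
    set x : EuclideanSpace ℝ (Fin d) :=
      (L + 1) • (EuclideanSpace.single (⟨0, hd⟩ : Fin d) (1 : ℝ)) with hx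
    have hxn : ‖x‖ = L + 1 := by
      rw [hx, norm_smul, Real.norm_eq_abs, abs_of_nonneg (by linarith), he, mul_one]
    have h0 : gradient (fun z : EuclideanSpace ℝ (Fin d) => ‖z‖ ^ (2 * n))
        (0 : EuclideanSpace ℝ (Fin d)) = 0 := by
      rw [gradient_norm_pow d n hn]; simp
    have hx' := hL x 0
    rw [h0, sub_zero, sub_zero, norm_gradient_norm_pow d n hn, hxn] at hx'
    have hpow : (L + 1) ^ 2 ≤ (L + 1) ^ (2 * n - 1) :=
      pow_le_pow_right₀ (by linarith) (by omega)
    have hn4 : (4 : ℝ) ≤ 2 * (n : ℝ) := by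
      have h2 : (2 : ℝ) ≤ (n : ℝ) := by exact_mod_cast hn2
      linarith
    have h4 : 4 * (L + 1) ^ 2 ≤ 2 * (n : ℝ) * (L + 1) ^ (2 * n - 1) :=
      mul_le_mul hn4 hpow (by positivity) (by linarith)
    nlinarith [hx', h4, hL0]
end

section
/- For vectors x, g ∈ R^d and i ∈ {1,...,d}, define ε_i := m_i - g_i. If sign(m_i) ≠ sign(g_i), then g_i · (sign(m_i) - sign(g_i)) ≤ 2|g_i| ≤ 2|ε_i|. Consequently, for any m, g ∈ R^d: ⟨g, sign(g) - sign(m)⟩ ≤ 2‖m - g‖_1, and also ⟨g, sign(g) - sign(m)⟩ ≤ 2√d‖m - g‖_2. -/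
open Finset

lemma sign_abs_le (x : ℝ) : |Real.sign x| ≤ 1 := by
  rcases lt_trichotomy x 0 with h|h|h
  · simp [Real.sign_of_neg h]
  · simp [h]
  · simp [Real.sign_of_pos h]

lemma abs_le_abs_sub_of_sign_ne (a b : ℝ) (h : Real.sign b ≠ Real.sign a) :
    |a| ≤ |b - a| := by
  rcases lt_trichotomy a 0 with ha|ha|ha
  · have hsa : Real.sign a = -1 := Real.sign_of_neg ha
    have hb : 0 ≤ b := by
      by_contra hb
      push_neg at hb
      exact h (by rw [Real.sign_of_neg hb, hsa])
    rw [abs_of_neg ha, abs_of_nonneg (by linarith)]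
    linarith
  · simp [ha]
  · have hsa : Real.sign a = 1 := Real.sign_of_pos ha
    have hb : b ≤ 0 := by
      by_contra hb
      push_neg at hb
      exact h (by rw [Real.sign_of_pos hb, hsa])
    rw [abs_of_pos ha, abs_of_nonpos (by linarith)]
    linarith

lemma mul_sign_sub_le (a s t : ℝ) (hs : |s| ≤ 1) (ht : |t| ≤ 1) :
    a * (s - t) ≤ 2 * |a| := by
  calc a * (s - t) ≤ |a * (s - t)| := le_abs_self _
    _ = |a| * |s - t| := abs_mul _ _
    _ ≤ |a| * 2 := by
        have : |s - t| ≤ 2 := by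
          have := abs_sub_abs_le_abs_sub s t
          have := abs_sub s t
          linarith [abs_sub s t]
        exact mul_le_mul_of_nonneg_left this (abs_nonneg _)
    _ = 2 * |a| := mul_comm _ _

/-- Per-coordinate sign estimate and its consequences:
if `sign(m_i) ≠ sign(g_i)` then `g_i (sign(m_i) - sign(g_i)) ≤ 2|g_i| ≤ 2|m_i - g_i|`;
consequently `⟨g, sign g - sign m⟩ ≤ 2‖m - g‖₁` and `⟨g, sign g - sign m⟩ ≤ 2√d ‖m - g‖₂`. -/
theorem stmt_11 (d : ℕ) (m g : Fin d → ℝ) :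
    (∀ i, Real.sign (m i) ≠ Real.sign (g i) →
      g i * (Real.sign (m i) - Real.sign (g i)) ≤ 2 * |g i| ∧
      2 * |g i| ≤ 2 * |m i - g i|) ∧
    (∑ i, g i * (Real.sign (g i) - Real.sign (m i)) ≤ 2 * ∑ i, |m i - g i|) ∧
    (∑ i, g i * (Real.sign (g i) - Real.sign (m i)) ≤
      2 * Real.sqrt d * Real.sqrt (∑ i, (m i - g i) ^ 2)) := by
  have key : ∀ i, g i * (Real.sign (g i) - Real.sign (m i)) ≤ 2 * |m i - g i| := by
    intro i
    by_cases h : Real.sign (m i) = Real.sign (g i)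
    · rw [h, sub_self, mul_zero]
      positivity
    · calc g i * (Real.sign (g i) - Real.sign (m i)) ≤ 2 * |g i| :=
            mul_sign_sub_le _ _ _ (sign_abs_le _) (sign_abs_le _)
        _ ≤ 2 * |m i - g i| := by
            have := abs_le_abs_sub_of_sign_ne (g i) (m i) h
            linarith
  have hl1 : ∑ i, g i * (Real.sign (g i) - Real.sign (m i)) ≤ 2 * ∑ i, |m i - g i| := by
    rw [Finset.mul_sum]
    exact Finset.sum_le_sum fun i _ => key i
  refine ⟨fun i h => ⟨mul_sign_sub_le _ _ _ (sign_abs_le _) (sign_abs_le _), ?_⟩, hl1, ?_⟩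
  · have := abs_le_abs_sub_of_sign_ne (g i) (m i) h
    linarith
  · have cs : (∑ i, |m i - g i|) ≤ Real.sqrt d * Real.sqrt (∑ i, (m i - g i) ^ 2) := by
      have h1 : (∑ i, |m i - g i|) ^ 2 ≤ (d : ℝ) * ∑ i, (m i - g i) ^ 2 := by
        have := sq_sum_le_card_mul_sum_sq (s := (univ : Finset (Fin d)))
          (f := fun i => |m i - g i|)
        simpa [sq_abs] using this
      have h2 : ∑ i, |m i - g i| = Real.sqrt ((∑ i, |m i - g i|) ^ 2) :=
        (Real.sqrt_sq (Finset.sum_nonneg fun i _ => abs_nonneg _)).symm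
      rw [h2, ← Real.sqrt_mul (by positivity)]
      exact Real.sqrt_le_sqrt h1
    calc ∑ i, g i * (Real.sign (g i) - Real.sign (m i)) ≤ 2 * ∑ i, |m i - g i| := hl1
      _ ≤ 2 * (Real.sqrt d * Real.sqrt (∑ i, (m i - g i) ^ 2)) := by linarith
      _ = 2 * Real.sqrt d * Real.sqrt (∑ i, (m i - g i) ^ 2) := by ring
end

section
/- Let ξ be a unimodal symmetric real random variable with mode (= center of symmetry) ν and E[|ξ - ν|^κ] < ∞ for some κ > 0. Then for τ > 0: if τ^κ ≥ (κ^κ/(κ+1)^{κ-1})·E[|ξ-ν|^κ], then P(|ξ - ν| ≥ τ) ≤ (κ/(κ+1))^κ · E[|ξ-ν|^κ]/τ^κ; and if τ^κ ≤ (κ^κ/(κ+1)^{κ-1})·E[|ξ-ν|^κ], then P(|ξ - ν| ≥ τ) ≤ 1 - (τ^κ/((κ+1)E[|ξ-ν|^κ]))^{1/κ}. -/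
set_option maxHeartbeats 1000000

open MeasureTheory Set

private lemma psi_le {κ u v : ℝ} (hκ : 0 < κ) (hu0 : 0 ≤ u) (hu1 : u ≤ 1)
    (hv0 : 0 < v) (hv1 : v < 1) (hcond : (u - v) * (κ - (κ + 1) * v) ≤ 0) :
    u ^ κ * (1 - u) ≤ v ^ κ * (1 - v) := by
  have hκ1 : (0:ℝ) < κ + 1 := by linarith
  set a := u / v with ha_def
  set b := (1 - u) / (1 - v) with hb_def
  have ha : 0 ≤ a := div_nonneg hu0 hv0.le
  have hb : 0 ≤ b := div_nonneg (by linarith) (by linarith)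
  have hw : κ / (κ + 1) + 1 / (κ + 1) = 1 := by field_simp
  have hgm := Real.geom_mean_le_arith_mean2_weighted
    (by positivity : (0:ℝ) ≤ κ / (κ + 1)) (by positivity : (0:ℝ) ≤ 1 / (κ + 1)) ha hb hw
  have hsum : κ / (κ + 1) * a + 1 / (κ + 1) * b ≤ 1 := by
    have key : κ * a + b ≤ κ + 1 := by
      rw [ha_def, hb_def, mul_div_assoc',
        div_add_div _ _ hv0.ne' (show (1:ℝ) - v ≠ 0 by linarith),
        div_le_iff₀ (mul_pos hv0 (show (0:ℝ) < 1 - v by linarith))]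
      nlinarith [hcond]
    rw [div_mul_eq_mul_div, div_mul_eq_mul_div, ← add_div, div_le_one hκ1]
    linarith [key]
  have hpow : (a ^ (κ/(κ+1)) * b ^ (1/(κ+1))) ^ (κ+1) = a ^ κ * b := by
    rw [Real.mul_rpow (Real.rpow_nonneg ha _) (Real.rpow_nonneg hb _),
      ← Real.rpow_mul ha, ← Real.rpow_mul hb]
    rw [div_mul_cancel₀ _ hκ1.ne', div_mul_cancel₀ _ hκ1.ne', Real.rpow_one]
  have hab1 : a ^ κ * b ≤ 1 := by
    calc a ^ κ * b = (a ^ (κ/(κ+1)) * b ^ (1/(κ+1))) ^ (κ+1) := hpow.symm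
      _ ≤ 1 ^ (κ+1) := Real.rpow_le_rpow (by positivity) (hgm.trans hsum) (by linarith)
      _ = 1 := Real.one_rpow _
  have hu' : u = a * v := by rw [ha_def, div_mul_cancel₀ _ hv0.ne']
  have h1u : 1 - u = b * (1 - v) := by
    rw [hb_def, div_mul_cancel₀ _ (show (1:ℝ) - v ≠ 0 by linarith)]
  calc u ^ κ * (1 - u) = (a * v) ^ κ * (b * (1 - v)) := by rw [← hu', ← h1u]
    _ = (a ^ κ * b) * (v ^ κ * (1 - v)) := by
        rw [Real.mul_rpow ha hv0.le]; ring
    _ ≤ 1 * (v ^ κ * (1 - v)) := by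
        apply mul_le_mul_of_nonneg_right hab1
        exact mul_nonneg (Real.rpow_nonneg hv0.le _) (by linarith)
    _ = v ^ κ * (1 - v) := one_mul _

private lemma layer_lower {Ω : Type*} [MeasureSpace Ω]
    [IsProbabilityMeasure (volume : Measure Ω)]
    (Y : Ω → ℝ) (hY : ∀ ω, 0 ≤ Y ω) (κ : ℝ) (hκ : 0 < κ)
    (hint : Integrable (fun ω => Y ω ^ κ))
    (c g T : ℝ) (hT : 0 < T)
    (hline : ∀ t ∈ Set.Ioo 0 T, 0 ≤ c + g * t ∧ c + g * t ≤ (volume {ω | t ≤ Y ω}).toReal) :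
    c * T ^ κ + g * (κ / (κ + 1)) * T ^ (κ + 1) ≤ ∫ ω, Y ω ^ κ := by
  have hκ1 : (0:ℝ) < κ + 1 := by linarith
  set f : Ω → ℝ := fun ω => Y ω ^ κ with hf
  have f_nn : 0 ≤ᵐ[volume] f := Filter.Eventually.of_forall fun ω => Real.rpow_nonneg (hY ω) κ
  have hrepr : ∫ ω, f ω = ∫ s in Set.Ioi (0:ℝ), (volume {ω | s ≤ f ω}).toReal :=
    hint.integral_eq_integral_meas_le f_nn
  set H : ℝ → ℝ := fun s => (volume {ω | s ≤ f ω}).toReal with hH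
  have Hanti : Antitone (fun s => volume {ω | s ≤ f ω}) := fun s t hst =>
    measure_mono (fun ω h => le_trans hst h)
  have Hnn : ∀ s, 0 ≤ H s := fun s => ENNReal.toReal_nonneg
  have hfle : ∫⁻ s in Set.Ioi (0:ℝ), volume {ω | s ≤ f ω} ≠ ⊤ := by
    rw [lintegral_congr_ae (meas_le_ae_eq_meas_lt volume (volume.restrict (Set.Ioi 0)) f),
      ← lintegral_eq_lintegral_meas_lt volume f_nn hint.aemeasurable]
    exact hint.lintegral_lt_top.ne
  have Hint : IntegrableOn H (Set.Ioi (0:ℝ)) :=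
    integrable_toReal_of_lintegral_ne_top (Antitone.measurable Hanti).aemeasurable hfle
  set S := T ^ κ with hS
  have hS0 : 0 < S := Real.rpow_pos_of_pos hT κ
  set L : ℝ → ℝ := fun s => c + g * s ^ (1/κ) with hL
  have hmin : ∀ s ∈ Set.Ioo (0:ℝ) S, 0 ≤ L s ∧ L s ≤ H s := by
    intro s hs
    have hs0 : 0 < s := hs.1
    have ht0 : 0 < s ^ (1/κ) := Real.rpow_pos_of_pos hs0 _
    have htT : s ^ (1/κ) < T := by
      have h2 : s ^ (1/κ) < S ^ (1/κ) := Real.rpow_lt_rpow hs0.le hs.2 (by positivity)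
      rwa [hS, ← Real.rpow_mul hT.le, mul_one_div, div_self hκ.ne', Real.rpow_one] at h2
    have hset : {ω | s ≤ f ω} = {ω | s ^ (1/κ) ≤ Y ω} := by
      ext ω
      simp only [Set.mem_setOf_eq, hf]
      constructor
      · intro h
        have h3 := Real.rpow_le_rpow hs0.le h (one_div_nonneg.mpr hκ.le)
        rwa [← Real.rpow_mul (hY ω), mul_one_div, div_self hκ.ne', Real.rpow_one] at h3
      · intro h
        have h3 := Real.rpow_le_rpow (Real.rpow_nonneg hs0.le _) h hκ.le
        rwa [← Real.rpow_mul hs0.le, one_div, inv_mul_cancel₀ hκ.ne', Real.rpow_one] at h3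
    have h4 := hline _ ⟨ht0, htT⟩
    refine ⟨h4.1, ?_⟩
    rw [hH]
    simp only [hset]
    exact h4.2
  have hexp : (-1:ℝ) < 1/κ := by have := one_div_pos.mpr hκ; linarith
  have hLiint : IntervalIntegrable L volume 0 S := by
    apply IntervalIntegrable.add intervalIntegrable_const
    exact (intervalIntegral.intervalIntegrable_rpow' hexp).const_mul g
  have hLint : IntegrableOn L (Set.Ioo 0 S) :=
    (hLiint.1).mono_set Set.Ioo_subset_Ioc_self
  have step1 : ∫ s in Set.Ioo (0:ℝ) S, L s ≤ ∫ s in Set.Ioo (0:ℝ) S, H s :=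
    setIntegral_mono_on hLint (Hint.mono_set Set.Ioo_subset_Ioi_self) measurableSet_Ioo
      (fun s hs => (hmin s hs).2)
  have step2 : ∫ s in Set.Ioo (0:ℝ) S, H s ≤ ∫ s in Set.Ioi (0:ℝ), H s :=
    setIntegral_mono_set Hint (Filter.Eventually.of_forall Hnn)
      (HasSubset.Subset.eventuallyLE Set.Ioo_subset_Ioi_self)
  have hcomp : ∫ s in Set.Ioo (0:ℝ) S, L s = c * S + g * (κ/(κ+1)) * T ^ (κ+1) := by
    rw [← MeasureTheory.integral_Ioc_eq_integral_Ioo, ← intervalIntegral.integral_of_le hS0.le]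
    rw [hL]
    rw [intervalIntegral.integral_add intervalIntegrable_const
      ((intervalIntegral.intervalIntegrable_rpow' hexp).const_mul g),
      intervalIntegral.integral_const, intervalIntegral.integral_const_mul,
      integral_rpow (Or.inl hexp)]
    rw [Real.zero_rpow (by positivity : (1/κ + 1) ≠ 0)]
    have hST : S ^ (1/κ + 1) = T ^ (κ + 1) := by
      rw [hS, ← Real.rpow_mul hT.le]
      congr 1
      field_simp
      ring
    rw [hST, smul_eq_mul]
    have h5 : (1/κ + 1) = (κ+1)/κ := by field_simp; ring
    rw [h5]
    field_simp
    ring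
  calc c * T ^ κ + g * (κ / (κ + 1)) * T ^ (κ + 1)
      = ∫ s in Set.Ioo (0:ℝ) S, L s := by rw [hcomp, hS]
    _ ≤ ∫ s in Set.Ioi (0:ℝ), H s := le_trans step1 step2
    _ = ∫ ω, f ω := hrepr.symm

/-- Generalized Gauss inequality: for a unimodal random variable symmetric about `ν`
(its CDF is convex left of `ν` and concave right of `ν`) with finite `κ`-th moment,
`P(|ξ - ν| ≥ τ)` admits the two-regime bound. -/
theorem stmt_13 {Ω : Type*} [MeasureSpace Ω] (hP : IsProbabilityMeasure (volume : Measure Ω))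
    (ξ : Ω → ℝ) (ν : ℝ) (κ : ℝ) (hκ : 0 < κ)
    (hmeas : AEMeasurable ξ)
    (hsymm : ∀ t : ℝ, volume {ω | t ≤ ξ ω - ν} = volume {ω | t ≤ ν - ξ ω})
    (hconv : ConvexOn ℝ (Set.Iio ν) (fun t => (volume {ω | ξ ω ≤ t}).toReal))
    (hconc : ConcaveOn ℝ (Set.Ioi ν) (fun t => (volume {ω | ξ ω ≤ t}).toReal))
    (hint : Integrable (fun ω => |ξ ω - ν| ^ κ))
    (τ : ℝ) (hτ : 0 < τ) :
    ((κ ^ κ / (κ + 1) ^ (κ - 1)) * ∫ ω, |ξ ω - ν| ^ κ ≤ τ ^ κ →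
      (volume {ω | τ ≤ |ξ ω - ν|}).toReal ≤
        (κ / (κ + 1)) ^ κ * (∫ ω, |ξ ω - ν| ^ κ) / τ ^ κ) ∧
    (τ ^ κ ≤ (κ ^ κ / (κ + 1) ^ (κ - 1)) * ∫ ω, |ξ ω - ν| ^ κ →
      (volume {ω | τ ≤ |ξ ω - ν|}).toReal ≤
        1 - (τ ^ κ / ((κ + 1) * ∫ ω, |ξ ω - ν| ^ κ)) ^ (1 / κ)) := by
  haveI := hP
  have hκ1 : (0:ℝ) < κ + 1 := by linarith
  obtain ⟨m, hm⟩ : ∃ r : ℝ, (∫ ω, |ξ ω - ν| ^ κ) = r := ⟨_, rfl⟩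
  rw [hm]
  have hm0 : 0 ≤ m := hm ▸ integral_nonneg fun ω => Real.rpow_nonneg (abs_nonneg _) κ
  have hτκ : 0 < τ ^ κ := Real.rpow_pos_of_pos hτ κ
  set F : ℝ → ℝ := fun t => (volume {ω | ξ ω ≤ t}).toReal with hFdef
  set G : ℝ → ℝ := fun t => (volume {ω | t ≤ |ξ ω - ν|}).toReal with hGdef
  have hGnn : ∀ t, 0 ≤ G t := fun t => ENNReal.toReal_nonneg
  have hG1 : ∀ t, G t ≤ 1 := by
    intro t
    have h := prob_le_one (μ := (volume : Measure Ω)) (s := {ω | t ≤ |ξ ω - ν|})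
    have := ENNReal.toReal_mono ENNReal.one_ne_top h
    simpa using this
  have hGanti : ∀ s t : ℝ, s ≤ t → G t ≤ G s := by
    intro s t hst
    exact ENNReal.toReal_mono (measure_ne_top _ _)
      (measure_mono fun ω h => le_trans hst h)
  -- symmetry: G t = 2 F (ν - t) for t > 0
  have hG2F : ∀ t : ℝ, 0 < t → G t = 2 * F (ν - t) := by
    intro t ht
    have hset : {ω | t ≤ |ξ ω - ν|} = {ω | t ≤ ξ ω - ν} ∪ {ω | t ≤ ν - ξ ω} := by
      ext ω
      simp only [Set.mem_setOf_eq, Set.mem_union, le_abs, neg_sub]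
    have hdisj : Disjoint {ω | t ≤ ξ ω - ν} {ω | t ≤ ν - ξ ω} := by
      rw [Set.disjoint_left]
      intro ω h1 h2
      simp only [Set.mem_setOf_eq] at h1 h2
      linarith
    have hnm : NullMeasurableSet {ω | t ≤ ν - ξ ω} (volume : Measure Ω) := by
      have he : {ω | t ≤ ν - ξ ω} = ξ ⁻¹' (Set.Iic (ν - t)) := by
        ext ω; simp only [Set.mem_setOf_eq, Set.mem_preimage, Set.mem_Iic]; constructor <;>
          (intro h; linarith)
      rw [he]
      exact hmeas.nullMeasurable measurableSet_Iic
    have hsymmeq : {ω | t ≤ ν - ξ ω} = {ω | ξ ω ≤ ν - t} := by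
      ext ω; simp only [Set.mem_setOf_eq]; constructor <;> (intro h; linarith)
    have : volume {ω | t ≤ |ξ ω - ν|} = 2 * volume {ω | ξ ω ≤ ν - t} := by
      rw [hset, measure_union₀ hnm hdisj.aedisjoint, hsymm t, hsymmeq, two_mul]
    rw [hGdef, hFdef]
    simp only [this, ENNReal.toReal_mul, ENNReal.toReal_ofNat]
  have hGconv : ConvexOn ℝ (Set.Ioi (0:ℝ)) G := by
    refine ⟨convex_Ioi 0, ?_⟩
    intro x hx y hy a b ha hb hab
    have hx0 : (0:ℝ) < x := hx
    have hy0 : (0:ℝ) < y := hy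
    have hxy : 0 < a * x + b * y := by
      rcases eq_or_lt_of_le ha with h | h
      · have hb1 : b = 1 := by linarith
        rw [← h, hb1]; simpa using hy0
      · have : 0 ≤ b * y := mul_nonneg hb hy0.le
        nlinarith
    have key := hconv.2 (show ν - x ∈ Set.Iio ν by simp [hx0])
      (show ν - y ∈ Set.Iio ν by simp [hy0]) ha hb hab
    have heq : a • (ν - x) + b • (ν - y) = ν - (a * x + b * y) := by
      simp only [smul_eq_mul]
      linear_combination ν * hab
    rw [heq] at key
    simp only [smul_eq_mul] at key ⊢
    rw [hG2F _ hx0, hG2F _ hy0, hG2F _ hxy]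
    linarith [key]
  -- master structural fact
  have master : G τ = 0 ∨ ∃ c T : ℝ, 0 < c ∧ c ≤ 1 ∧ τ < T ∧
      G τ * T = c * (T - τ) ∧ c * T ^ κ ≤ (κ + 1) * m := by
    rcases eq_or_lt_of_le (hGnn τ) with h0 | hp
    · exact Or.inl h0.symm
    right
    set Sl := (fun s => (G τ - G s) / (τ - s)) '' Set.Ioo 0 τ with hSl
    have hne : Sl.Nonempty :=
      ⟨_, Set.mem_image_of_mem _ (⟨half_pos hτ, half_lt_self hτ⟩ : τ/2 ∈ Set.Ioo 0 τ)⟩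
    have hslope : ∀ s ∈ Set.Ioo (0:ℝ) τ, ∀ u, τ < u →
        (G τ - G s) / (τ - s) ≤ (G u - G τ) / (u - τ) := by
      intro s hs u hu
      exact hGconv.slope_mono_adjacent hs.1 (show u ∈ Set.Ioi (0:ℝ) from lt_trans hτ hu) hs.2 hu
    have hbdd : BddAbove Sl := by
      refine ⟨(G (τ+1) - G τ) / (τ + 1 - τ), ?_⟩
      rintro v ⟨s, hs, rfl⟩
      exact hslope s hs (τ+1) (lt_add_one τ)
    set g := sSup Sl with hgdef
    have hgle : g ≤ 0 := by
      apply csSup_le hne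
      rintro v ⟨s, hs, rfl⟩
      apply div_nonpos_of_nonpos_of_nonneg
      · linarith [hGanti s τ hs.2.le]
      · linarith [hs.2]
    have hsupp : ∀ t : ℝ, 0 < t → G τ + g * (t - τ) ≤ G t := by
      intro t ht
      rcases lt_trichotomy t τ with h | h | h
      · have hin : (G τ - G t) / (τ - t) ≤ g := le_csSup hbdd (Set.mem_image_of_mem _ ⟨ht, h⟩)
        rw [div_le_iff₀ (by linarith : (0:ℝ) < τ - t)] at hin
        have hr : g * (t - τ) = -(g * (τ - t)) := by ring
        linarith
      · simp [h]
      · have hub : g ≤ (G t - G τ) / (t - τ) := by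
          apply csSup_le hne
          rintro v ⟨s, hs, rfl⟩
          exact hslope s hs t h
        rw [le_div_iff₀ (by linarith : (0:ℝ) < t - τ)] at hub
        linarith
    by_cases hg : g < 0
    · -- main case
      set c := G τ - g * τ with hc
      set T := τ - G τ / g with hT
      have hgτ : g * τ < 0 := mul_neg_of_neg_of_pos hg hτ
      have hc0 : 0 < c := by rw [hc]; linarith
      have hTτ : τ < T := by
        rw [hT]
        have : G τ / g < 0 := div_neg_of_pos_of_neg hp hg
        linarith
      have hT0 : 0 < T := lt_trans hτ hTτ
      have hgT : g * T = g * τ - G τ := by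
        rw [hT]
        field_simp [hg.ne]
      have hc1 : c ≤ 1 := by
        refine le_of_forall_pos_le_add fun ε hε => ?_
        set t := min τ (ε / (-g)) with htdef
        have ht0 : 0 < t := lt_min hτ (div_pos hε (neg_pos.mpr hg))
        have h1 := hsupp t ht0
        have h2 := hG1 t
        have ht2 : t ≤ ε / (-g) := min_le_right _ _
        have h3 : (-g) * t ≤ (-g) * (ε / (-g)) := mul_le_mul_of_nonneg_left ht2 (by linarith)
        have h4 : (-g) * (ε / (-g)) = ε := by
          field_simp
          exact div_self hg.ne
        have h5 : (-g) * t = -(g * t) := by ring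
        have h6 : g * (t - τ) = g * t - g * τ := by ring
        rw [hc]
        linarith
      refine ⟨c, T, hc0, hc1, hTτ, ?_, ?_⟩
      · rw [hc, hT]; field_simp [hg.ne]; ring
      · have hline : ∀ t ∈ Set.Ioo (0:ℝ) T, 0 ≤ c + g * t ∧
            c + g * t ≤ (volume {ω | t ≤ |ξ ω - ν|}).toReal := by
          intro t ht
          constructor
          · have h7 : g * T ≤ g * t := by
              have := mul_le_mul_of_nonpos_left ht.2.le hgle
              nlinarith [ht.2, hg]
            have h8 : c + g * T = 0 := by rw [hc]; linarith [hgT]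
            linarith
          · have h9 := hsupp t ht.1
            have h10 : c + g * t = G τ + g * (t - τ) := by rw [hc]; ring
            rw [h10]
            exact h9
        have hmain := layer_lower (fun ω => |ξ ω - ν|) (fun ω => abs_nonneg _) κ hκ hint
          c g T hT0 hline
        rw [hm] at hmain
        have hTκ1 : T ^ (κ + 1) = T ^ κ * T := Real.rpow_add_one hT0.ne' κ
        rw [hTκ1] at hmain
        have hX : (0:ℝ) < T ^ κ := Real.rpow_pos_of_pos hT0 κ
        have hgc : g * T = -c := by rw [hc]; linarith [hgT]
        have hre : c * T ^ κ + g * (κ / (κ + 1)) * (T ^ κ * T)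
            = c * T ^ κ * (1 / (κ + 1)) := by
          have : g * (κ / (κ + 1)) * (T ^ κ * T) = (κ / (κ + 1)) * T ^ κ * (g * T) := by ring
          rw [this, hgc]
          field_simp
          ring
        rw [hre] at hmain
        calc c * T ^ κ = (c * T ^ κ * (1 / (κ + 1))) * (κ + 1) := by field_simp
          _ ≤ m * (κ + 1) := mul_le_mul_of_nonneg_right hmain (by linarith)
          _ = (κ + 1) * m := by ring
    · -- degenerate: g = 0, contradiction with finiteness of the moment
      exfalso
      have hg0 : g = 0 := le_antisymm hgle (not_lt.mp hg)
      have hb : (0:ℝ) < (m + 1) / G τ := div_pos (by linarith) hp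
      set T := ((m + 1) / G τ) ^ (1/κ) with hTdef
      have hT0 : 0 < T := Real.rpow_pos_of_pos hb _
      have hline : ∀ t ∈ Set.Ioo (0:ℝ) T, 0 ≤ G τ + 0 * t ∧
          G τ + 0 * t ≤ (volume {ω | t ≤ |ξ ω - ν|}).toReal := by
        intro t ht
        constructor
        · simpa using hp.le
        · have h9 := hsupp t ht.1
          rw [hg0] at h9
          simpa using h9
      have hmain := layer_lower (fun ω => |ξ ω - ν|) (fun ω => abs_nonneg _) κ hκ hint
        (G τ) 0 T hT0 hline
      rw [hm] at hmain
      have hTκ : T ^ κ = (m + 1) / G τ := by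
        rw [hTdef, ← Real.rpow_mul hb.le, one_div, inv_mul_cancel₀ hκ.ne', Real.rpow_one]
      rw [hTκ] at hmain
      have : G τ * ((m + 1) / G τ) = m + 1 := by field_simp
      rw [this] at hmain
      simp only [zero_mul, zero_add] at hmain
      linarith [hmain]
  -- common arithmetic for regime 2 bound on u0
  have hCpos : (0:ℝ) < κ ^ κ / (κ + 1) ^ (κ - 1) :=
    div_pos (Real.rpow_pos_of_pos hκ _) (Real.rpow_pos_of_pos hκ1 _)
  have hvκ : ((κ / (κ + 1)) : ℝ) ^ κ = κ ^ κ / (κ + 1) ^ κ := Real.div_rpow hκ.le hκ1.le κ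
  have hu0v_gen : 0 < m → τ ^ κ ≤ κ ^ κ / (κ + 1) ^ (κ - 1) * m →
      (τ ^ κ / ((κ + 1) * m)) ^ (1/κ) ≤ κ / (κ + 1) := by
    intro hmp hyp
    have hA : (0:ℝ) < (κ + 1) * m := by positivity
    have hsub : (κ + 1 : ℝ) ^ (κ - 1) = (κ + 1) ^ κ / (κ + 1) := by
      rw [Real.rpow_sub hκ1, Real.rpow_one]
    have h1 : τ ^ κ / ((κ + 1) * m) ≤ (κ / (κ + 1)) ^ κ := by
      rw [div_le_iff₀ hA, hvκ]
      rw [hsub] at hyp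
      have he : κ ^ κ / ((κ + 1) ^ κ / (κ + 1)) * m = κ ^ κ / (κ + 1) ^ κ * ((κ + 1) * m) := by
        rw [div_div_eq_mul_div]
        ring
      linarith [hyp, he.symm.le, he.le]
    calc (τ ^ κ / ((κ + 1) * m)) ^ (1/κ) ≤ ((κ / (κ + 1)) ^ κ) ^ (1/κ) :=
          Real.rpow_le_rpow (by positivity) h1 (by positivity)
      _ = κ / (κ + 1) := by
          rw [← Real.rpow_mul (by positivity), mul_one_div, div_self hκ.ne', Real.rpow_one]
  have hv1 : κ / (κ + 1) < 1 := (div_lt_one hκ1).mpr (by linarith)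
  constructor
  · -- regime 1
    intro _
    rcases master with h0 | ⟨c, T, hc0, hc1, hTτ, hpT, hcT⟩
    · rw [← hGdef] at *
      show G τ ≤ _
      rw [h0]
      exact div_nonneg (mul_nonneg (Real.rpow_nonneg (by positivity) κ) hm0) hτκ.le
    · have hT0 : 0 < T := lt_trans hτ hTτ
      have hTκ : 0 < T ^ κ := Real.rpow_pos_of_pos hT0 κ
      set u := τ / T with hu
      have hu0 : 0 < u := div_pos hτ hT0
      have hu1 : u < 1 := (div_lt_one hT0).mpr hTτ
      have huκ : u ^ κ * T ^ κ = τ ^ κ := by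
        rw [← Real.mul_rpow hu0.le hT0.le, hu, div_mul_cancel₀ _ hT0.ne']
      have hp_eq : G τ = c * (1 - u) := by
        have h1 : G τ = c * (T - τ) / T := by
          rw [← hpT]; field_simp
        rw [h1, hu]
        field_simp
      have hcentral : G τ * τ ^ κ ≤ (κ + 1) * m * (u ^ κ * (1 - u)) := by
        calc G τ * τ ^ κ = (c * T ^ κ) * (u ^ κ * (1 - u)) := by
              rw [hp_eq, ← huκ]; ring
          _ ≤ ((κ + 1) * m) * (u ^ κ * (1 - u)) := by
              apply mul_le_mul_of_nonneg_right hcT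
              exact mul_nonneg (Real.rpow_nonneg hu0.le _) (by linarith)
      have hpsi : u ^ κ * (1 - u) ≤ (κ/(κ+1)) ^ κ * (1 - κ/(κ+1)) := by
        apply psi_le hκ hu0.le hu1.le (div_pos hκ hκ1) hv1
        have hz : κ - (κ + 1) * (κ / (κ + 1)) = 0 := by field_simp; ring
        rw [hz, mul_zero]
      have h1v : 1 - κ/(κ+1) = 1/(κ+1) := by field_simp; ring
      show G τ ≤ (κ / (κ + 1)) ^ κ * m / τ ^ κ
      rw [le_div_iff₀ hτκ]
      calc G τ * τ ^ κ ≤ (κ + 1) * m * (u ^ κ * (1 - u)) := hcentral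
        _ ≤ (κ + 1) * m * ((κ/(κ+1)) ^ κ * (1/(κ+1))) := by
            apply mul_le_mul_of_nonneg_left (by rw [← h1v]; exact hpsi)
            have hmp : 0 < m := by nlinarith [mul_pos hc0 hTκ]
            positivity
        _ = (κ / (κ + 1)) ^ κ * m := by
            have hone : (κ + 1) * (1/(κ+1)) = 1 := by field_simp
            linear_combination (m * (κ/(κ+1)) ^ κ) * hone
  · -- regime 2
    intro hyp2
    have hmp : 0 < m := by
      by_contra hcon
      push_neg at hcon
      nlinarith [mul_nonpos_of_nonneg_of_nonpos hCpos.le hcon]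
    have hA : (0:ℝ) < (κ + 1) * m := by positivity
    set u0 := (τ ^ κ / ((κ + 1) * m)) ^ (1/κ) with hu0def
    have hratio : 0 < τ ^ κ / ((κ + 1) * m) := div_pos hτκ hA
    have hu00 : 0 < u0 := Real.rpow_pos_of_pos hratio _
    have hu0κ : u0 ^ κ = τ ^ κ / ((κ + 1) * m) := by
      rw [hu0def, ← Real.rpow_mul hratio.le, one_div, inv_mul_cancel₀ hκ.ne', Real.rpow_one]
    have hu0v : u0 ≤ κ / (κ + 1) := hu0v_gen hmp hyp2
    have hu01 : u0 < 1 := lt_of_le_of_lt hu0v hv1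
    show G τ ≤ 1 - u0
    rcases master with h0 | ⟨c, T, hc0, hc1, hTτ, hpT, hcT⟩
    · rw [h0]; linarith
    · have hT0 : 0 < T := lt_trans hτ hTτ
      have hTκ : 0 < T ^ κ := Real.rpow_pos_of_pos hT0 κ
      set u := τ / T with hu
      have hu0 : 0 < u := div_pos hτ hT0
      have hu1 : u < 1 := (div_lt_one hT0).mpr hTτ
      have huκ : u ^ κ * T ^ κ = τ ^ κ := by
        rw [← Real.mul_rpow hu0.le hT0.le, hu, div_mul_cancel₀ _ hT0.ne']
      have hp_eq : G τ = c * (1 - u) := by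
        have h1 : G τ = c * (T - τ) / T := by
          rw [← hpT]; field_simp
        rw [h1, hu]
        field_simp
      by_cases hcase : u0 ≤ u
      · rw [hp_eq]
        nlinarith [hc1, hu1, hc0]
      · push_neg at hcase
        have hcentral : G τ * τ ^ κ ≤ (κ + 1) * m * (u ^ κ * (1 - u)) := by
          calc G τ * τ ^ κ = (c * T ^ κ) * (u ^ κ * (1 - u)) := by
                rw [hp_eq, ← huκ]; ring
            _ ≤ ((κ + 1) * m) * (u ^ κ * (1 - u)) := by
                apply mul_le_mul_of_nonneg_right hcT
                exact mul_nonneg (Real.rpow_nonneg hu0.le _) (by linarith)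
        have hpsi2 : u ^ κ * (1 - u) ≤ u0 ^ κ * (1 - u0) := by
          apply psi_le hκ hu0.le hu1.le hu00 hu01
          have hid : (κ + 1) * (κ / (κ + 1)) = κ := by field_simp
          refine mul_nonpos_of_nonpos_of_nonneg (by linarith) ?_
          linarith [mul_le_mul_of_nonneg_left hu0v hκ1.le]
        have hchain : G τ * τ ^ κ ≤ (κ + 1) * m * (u0 ^ κ * (1 - u0)) :=
          le_trans hcentral (mul_le_mul_of_nonneg_left hpsi2 (mul_nonneg hκ1.le hm0))
        rw [hu0κ] at hchain
        have he : (κ + 1) * m * ((τ ^ κ / ((κ + 1) * m)) * (1 - u0)) = τ ^ κ * (1 - u0) := by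
          field_simp
        rw [he] at hchain
        have := le_of_mul_le_mul_right (by linarith [hchain] : G τ * τ ^ κ ≤ (1 - u0) * τ ^ κ) hτκ
        linarith
end

section
/- Let g be a symmetric unimodal real random variable centered at μ ≠ 0 with E[|g - μ|^κ] ≤ σ^κ for some κ > 0, and let S := |μ|/σ. Then the failure probability q := P(sign(g) ≠ sign(μ)) satisfies: if S^κ ≥ κ^κ/(κ+1)^{κ-1} then q ≤ (1/2)(κ/(κ+1))^κ / S^κ; if S^κ ≤ κ^κ/(κ+1)^{κ-1} then q ≤ 1/2 - (1/2)·S/(κ+1)^{1/κ}. In both cases q < 1/2. -/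
/-!
Let `ν` be the law of `(g - μ) / σ`: it is symmetric, `∫ |x| ^ κ dν ≤ 1`, and unimodality makes
its tail `G t = ν (t, ∞)` convex on `(0, ∞)`; the failure probability is `ν [S, ∞) ≤ G S`.
Writing the tangent to `G` at `S` as `t ↦ r (T - t)`, we get `G S = r (T - S)` and
`r (T - t) ≤ G t` on `(0, T]`. Symmetry gives `G ≤ 1/2`, hence `r T ≤ 1/2`, and the layer-cake
formula `∫ |x| ^ κ dν = 2 ∫ κ t ^ (κ - 1) G t dt` gives `2 r T ^ (κ + 1) ≤ κ + 1`. Maximising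
`r (T - S)` under these two constraints, by Bernoulli's inequality, gives the two regimes.
-/

open MeasureTheory Set Real Filter Topology

-- Bernoulli's inequality in disguise: on `T₀ ≤ T` (on all `T ≥ 0` when `(κ + 1) s = κ T₀`),
-- `T ↦ (T - s) / T ^ (κ + 1)` is maximal at `T₀`.
lemma sub_mul_rpow_succ_le {κ s T₀ T : ℝ} (hκ : 0 < κ) (hT₀ : 0 < T₀) (hT : 0 ≤ T)
    (hs : s ≤ T₀) (h : 0 ≤ (T - T₀) * (κ * T₀ - (κ + 1) * s)) :
    (T - s) * T₀ ^ (κ + 1) ≤ T ^ (κ + 1) * (T₀ - s) := by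
  have hbern : 1 + (κ + 1) * (T / T₀ - 1) ≤ (T / T₀) ^ (κ + 1) := by
    simpa using one_add_mul_self_le_rpow_one_add
      (show -1 ≤ T / T₀ - 1 by linarith [div_nonneg hT hT₀.le]) (by linarith : 1 ≤ κ + 1)
  rw [div_rpow hT hT₀.le, le_div_iff₀ (by positivity)] at hbern
  have hlin : (T - s) * T₀ ≤ (T₀ + (κ + 1) * (T - T₀)) * (T₀ - s) := by nlinarith
  have hpos : 0 ≤ T₀ ^ (κ + 1) / T₀ := by positivity
  calc (T - s) * T₀ ^ (κ + 1) = (T - s) * T₀ * (T₀ ^ (κ + 1) / T₀) := by field_simp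
    _ ≤ (T₀ + (κ + 1) * (T - T₀)) * (T₀ - s) * (T₀ ^ (κ + 1) / T₀) := by gcongr
    _ = (1 + (κ + 1) * (T / T₀ - 1)) * T₀ ^ (κ + 1) * (T₀ - s) := by field_simp
    _ ≤ T ^ (κ + 1) * (T₀ - s) := by gcongr

lemma mul_sub_le_of_two_mul_rpow_le {κ r s T : ℝ} (hκ : 0 < κ) (hr : 0 ≤ r) (hs : 0 < s)
    (hsT : s ≤ T) (hmom : 2 * r * T ^ (κ + 1) ≤ κ + 1) :
    r * (T - s) ≤ 1 / 2 * (κ / (κ + 1)) ^ κ / s ^ κ := by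
  set T₀ := s / (κ / (κ + 1))
  have hT₀ : 0 < T₀ := by positivity
  have hT₀κ : (κ / (κ + 1)) ^ κ / s ^ κ = 1 / T₀ ^ κ := by
    rw [div_rpow hs.le (by positivity)]
    field_simp
  have hT₀s : T₀ - s = s / κ := by simp only [T₀]; field_simp; ring
  have key := sub_mul_rpow_succ_le (s := s) hκ hT₀ (hs.le.trans hsT) (by linarith [div_pos hs hκ])
    (by rw [show κ * T₀ - (κ + 1) * s = 0 by simp only [T₀]; field_simp; ring, mul_zero])
  rw [hT₀s, rpow_add_one hT₀.ne'] at key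
  have h : r * (T - s) * T₀ ^ κ * T₀ ≤ 1 / 2 * T₀ := by
    calc r * (T - s) * T₀ ^ κ * T₀ = r * ((T - s) * (T₀ ^ κ * T₀)) := by ring
      _ ≤ r * (T ^ (κ + 1) * (s / κ)) := by gcongr
      _ = 2 * r * T ^ (κ + 1) * (s / κ) / 2 := by ring
      _ ≤ (κ + 1) * (s / κ) / 2 := by gcongr
      _ = 1 / 2 * T₀ := by simp only [T₀]; field_simp
  rw [mul_div_assoc, hT₀κ, mul_one_div, le_div_iff₀ (by positivity)]
  exact le_of_mul_le_mul_right h hT₀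

lemma add_one_mul_le_of_rpow_le {κ s : ℝ} (hκ : 0 < κ) (hs : 0 ≤ s)
    (hreg : s ^ κ ≤ κ ^ κ / (κ + 1) ^ (κ - 1)) :
    (κ + 1) * s ≤ κ * (κ + 1) ^ (1 / κ) := by
  have hκ1 : 0 < κ + 1 := by linarith
  rw [← rpow_le_rpow_iff (by positivity) (by positivity) hκ, mul_rpow hκ1.le hs,
    mul_rpow hκ.le (by positivity), ← rpow_mul hκ1.le, one_div_mul_cancel hκ.ne', rpow_one]
  rw [rpow_sub hκ1, rpow_one, div_div_eq_mul_div, le_div_iff₀ (by positivity)] at hreg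
  nlinarith [rpow_pos_of_pos hκ1 κ]

lemma mul_sub_le_of_mul_le_half {κ r s T : ℝ} (hκ : 0 < κ) (hr : 0 ≤ r) (hs : 0 < s)
    (hsT : s ≤ T) (hhalf : r * T ≤ 1 / 2) (hmom : 2 * r * T ^ (κ + 1) ≤ κ + 1)
    (hreg : (κ + 1) * s ≤ κ * (κ + 1) ^ (1 / κ)) :
    r * (T - s) ≤ 1 / 2 - 1 / 2 * s / (κ + 1) ^ (1 / κ) := by
  set E := (κ + 1) ^ (1 / κ)
  have hE : 0 < E := by positivity
  have hT : 0 < T := hs.trans_le hsT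
  -- the constraints `r T ≤ 1/2` and `2 r T ^ (κ + 1) ≤ κ + 1` cross at `T = E`
  rcases le_total T E with hTE | hET
  · have h1 : r * (T - s) * T ≤ 1 / 2 * (T - s) := by
      calc r * (T - s) * T = r * T * (T - s) := by ring
        _ ≤ 1 / 2 * (T - s) := by gcongr
    have h2 : s / E ≤ s / T := by gcongr
    rw [← le_div_iff₀ hT] at h1
    calc r * (T - s) ≤ 1 / 2 * (T - s) / T := h1
      _ = 1 / 2 - 1 / 2 * (s / T) := by field_simp
      _ ≤ 1 / 2 - 1 / 2 * s / E := by rw [mul_div_assoc]; linarith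
  · have hEs : s ≤ E := by nlinarith
    have key := sub_mul_rpow_succ_le hκ hE hT.le hEs (by nlinarith)
    have hEκ : E ^ (κ + 1) = (κ + 1) * E := by
      rw [rpow_add_one hE.ne', ← rpow_mul (by linarith), one_div_mul_cancel hκ.ne', rpow_one]
    rw [hEκ] at key
    have h1 : r * (T - s) * ((κ + 1) * E) ≤ (κ + 1) * (E - s) / 2 := by
      calc r * (T - s) * ((κ + 1) * E) = r * ((T - s) * ((κ + 1) * E)) := by ring
        _ ≤ r * (T ^ (κ + 1) * (E - s)) := by gcongr
        _ = 2 * r * T ^ (κ + 1) * (E - s) / 2 := by ring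
        _ ≤ (κ + 1) * (E - s) / 2 := by gcongr
    rw [← le_div_iff₀ (by positivity)] at h1
    calc r * (T - s) ≤ (κ + 1) * (E - s) / 2 / ((κ + 1) * E) := h1
      _ = 1 / 2 - 1 / 2 * s / E := by field_simp

lemma half_mul_rpow_div_rpow_lt_half {κ s : ℝ} (hκ : 0 < κ) (hs : 0 < s)
    (h : κ ^ κ / (κ + 1) ^ (κ - 1) ≤ s ^ κ) : 1 / 2 * (κ / (κ + 1)) ^ κ / s ^ κ < 1 / 2 := by
  have hκ1 : 0 < κ + 1 := by linarith
  have hc : (κ / (κ + 1)) ^ κ = κ ^ κ / (κ + 1) ^ (κ - 1) / (κ + 1) := by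
    rw [div_rpow hκ.le hκ1.le, rpow_sub hκ1, rpow_one, div_div, div_mul_cancel₀ _ hκ1.ne']
  have hthr : 0 < κ ^ κ / (κ + 1) ^ (κ - 1) := by positivity
  rw [div_lt_iff₀ (by positivity), hc]
  have : κ ^ κ / (κ + 1) ^ (κ - 1) / (κ + 1) < κ ^ κ / (κ + 1) ^ (κ - 1) :=
    div_lt_self hthr (by linarith)
  linarith

lemma integral_rpow_sub_one_mul {κ : ℝ} (hκ : 0 < κ) (x : ℝ) :
    ∫ t in (0 : ℝ)..x, κ * t ^ (κ - 1) = x ^ κ := by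
  rw [intervalIntegral.integral_const_mul, integral_rpow (Or.inl (by linarith)),
    sub_add_cancel, zero_rpow hκ.ne', sub_zero]
  field_simp

lemma integral_rpow_sub_one_mul_sub {κ T : ℝ} (hκ : 0 < κ) (hT : 0 ≤ T) :
    ∫ t in (0 : ℝ)..T, κ * t ^ (κ - 1) * (T - t) = T ^ (κ + 1) / (κ + 1) := by
  have hsplit : EqOn (fun t : ℝ => κ * t ^ (κ - 1) * (T - t))
      (fun t => T * (κ * t ^ (κ - 1)) - κ * t ^ (κ - 1 + 1)) (uIcc 0 T) := fun t ht => by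
    rw [uIcc_of_le hT] at ht
    simp only [rpow_add_one' ht.1 (by linarith : κ - 1 + 1 ≠ 0)]
    ring
  have h1 := intervalIntegral.intervalIntegrable_rpow' (a := 0) (b := T) (r := κ - 1)
    (by linarith)
  have h2 := intervalIntegral.intervalIntegrable_rpow' (a := 0) (b := T) (r := κ - 1 + 1)
    (by linarith)
  rw [intervalIntegral.integral_congr hsplit,
    intervalIntegral.integral_sub ((h1.const_mul κ).const_mul T) (h2.const_mul κ),
    intervalIntegral.integral_const_mul, integral_rpow_sub_one_mul hκ,
    intervalIntegral.integral_const_mul, integral_rpow (Or.inl (by linarith)), sub_add_cancel,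
    zero_rpow (by linarith), sub_zero, rpow_add_one' hT (by linarith)]
  field_simp
  ring

lemma ConvexOn.add_rightDeriv_mul_sub_le {f : ℝ → ℝ} {S : Set ℝ} {x y : ℝ} (hf : ConvexOn ℝ S f)
    (hx : x ∈ interior S) (hy : y ∈ S) :
    f x + derivWithin f (Ioi x) x * (y - x) ≤ f y := by
  rcases lt_trichotomy y x with hyx | rfl | hxy
  · have h := (hf.slope_le_leftDeriv_of_mem_interior hy hx hyx).trans
      (hf.leftDeriv_le_rightDeriv_of_mem_interior hx)
    rw [slope_def_field, div_le_iff₀ (sub_pos.mpr hyx)] at h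
    linarith
  · simp
  · have h := hf.rightDeriv_le_slope_of_mem_interior hx hy hxy
    rw [slope_def_field, le_div_iff₀ (sub_pos.mpr hxy)] at h
    linarith

lemma measureReal_Ici_le_of_continuousWithinAt {ν : Measure ℝ} [IsFiniteMeasure ν] {s : ℝ}
    (h : ContinuousWithinAt (fun t => ν.real (Ioi t)) (Iio s) s) :
    ν.real (Ici s) ≤ ν.real (Ioi s) :=
  ge_of_tendsto h.tendsto <| eventually_nhdsWithin_of_forall fun _ ht =>
    measureReal_mono (Ici_subset_Ioi.mpr ht)

lemma tendsto_measureReal_Ioi_atTop (ν : Measure ℝ) [IsProbabilityMeasure ν] :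
    Tendsto (fun t => ν.real (Ioi t)) atTop (𝓝 0) := by
  have h : ∀ t, ν.real (Ioi t) = 1 - ProbabilityTheory.cdf ν t := fun t => by
    rw [ProbabilityTheory.cdf_eq_real, ← compl_Iic, measureReal_compl measurableSet_Iic,
      probReal_univ]
  simpa [h] using (ProbabilityTheory.tendsto_cdf_atTop ν).const_sub 1

section SymmetricMeasure

variable {ν : Measure ℝ} [ν.IsNegInvariant]

lemma measure_abs_gt_eq_two_mul {t : ℝ} (ht : 0 ≤ t) :
    ν {x | t < |x|} = 2 * ν (Ioi t) := by
  have hunion : {x | t < |x|} = Ioi t ∪ Neg.neg ⁻¹' Ioi t := by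
    ext x; simp [lt_abs, lt_neg]
  have hdisj : Disjoint (Ioi t) (Neg.neg ⁻¹' Ioi t) := by
    rw [Set.disjoint_left]; intro x h1 h2
    simp only [mem_Ioi, mem_preimage] at h1 h2
    linarith
  rw [hunion, measure_union hdisj (measurableSet_Ioi.preimage measurable_neg),
    Measure.measure_preimage_neg, two_mul]

lemma measureReal_Ioi_le_half [IsProbabilityMeasure ν] {t : ℝ} (ht : 0 ≤ t) :
    ν.real (Ioi t) ≤ 1 / 2 := by
  have h : 2 * ν (Ioi t) ≤ 1 := measure_abs_gt_eq_two_mul (ν := ν) ht ▸ prob_le_one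
  have h' : 2 * ν.real (Ioi t) ≤ 1 := by
    simpa [Measure.real, ENNReal.toReal_mul] using ENNReal.toReal_mono ENNReal.one_ne_top h
  linarith

lemma lintegral_abs_rpow_eq {κ : ℝ} (hκ : 0 < κ) :
    ∫⁻ x, ENNReal.ofReal (|x| ^ κ) ∂ν
      = 2 * ∫⁻ t in Ioi 0, ν (Ioi t) * ENNReal.ofReal (κ * t ^ (κ - 1)) := by
  have layer := lintegral_comp_eq_lintegral_meas_lt_mul ν (f := fun x => |x|)
    (g := fun t => κ * t ^ (κ - 1))
    (Filter.Eventually.of_forall fun x => abs_nonneg x) measurable_abs.aemeasurable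
    (fun t _ => (intervalIntegral.intervalIntegrable_rpow' (by linarith)).const_mul κ)
    ((ae_restrict_iff' measurableSet_Ioi).mpr (Filter.Eventually.of_forall fun t (ht : 0 < t) =>
      by positivity))
  simp only [integral_rpow_sub_one_mul hκ] at layer
  rw [layer, ← lintegral_const_mul' _ _ ENNReal.ofNat_ne_top]
  refine setLIntegral_congr_fun measurableSet_Ioi fun t (ht : 0 < t) => ?_
  rw [measure_abs_gt_eq_two_mul ht.le, mul_assoc]

lemma ofReal_le_lintegral_abs_rpow [IsFiniteMeasure ν] {κ r T : ℝ} (hκ : 0 < κ) (hr : 0 ≤ r)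
    (hT : 0 ≤ T)
    (htail : ∀ t ∈ Ioc 0 T, r * (T - t) ≤ ν.real (Ioi t)) :
    ENNReal.ofReal (2 * r * T ^ (κ + 1) / (κ + 1)) ≤ ∫⁻ x, ENNReal.ofReal (|x| ^ κ) ∂ν := by
  set φ : ℝ → ℝ := fun t => r * (κ * t ^ (κ - 1) * (T - t))
  have hφ_int : IntegrableOn φ (Ioc 0 T) := by
    rw [← intervalIntegrable_iff_integrableOn_Ioc_of_le hT]
    exact (((intervalIntegral.intervalIntegrable_rpow' (by linarith)).const_mul κ).mul_continuousOn
      (by fun_prop)).const_mul r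
  have hφ_nonneg : 0 ≤ᵐ[volume.restrict (Ioc 0 T)] φ :=
    (ae_restrict_iff' measurableSet_Ioc).mpr (Filter.Eventually.of_forall fun t ht => by
      have := sub_nonneg.mpr ht.2
      have := ht.1.le
      positivity)
  have hφ : ∫ t in Ioc 0 T, φ t = r * (T ^ (κ + 1) / (κ + 1)) := by
    rw [← intervalIntegral.integral_of_le hT, intervalIntegral.integral_const_mul,
      integral_rpow_sub_one_mul_sub hκ hT]
  rw [lintegral_abs_rpow_eq hκ]
  calc ENNReal.ofReal (2 * r * T ^ (κ + 1) / (κ + 1))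
      = 2 * ∫⁻ t in Ioc 0 T, ENNReal.ofReal (φ t) := by
        rw [← ofReal_integral_eq_lintegral_ofReal hφ_int hφ_nonneg, hφ, ← ENNReal.ofReal_ofNat,
          ← ENNReal.ofReal_mul zero_le_two]
        ring_nf
    _ ≤ 2 * ∫⁻ t in Ioc 0 T, ν (Ioi t) * ENNReal.ofReal (κ * t ^ (κ - 1)) := by
        gcongr 2 * ?_
        refine setLIntegral_mono' measurableSet_Ioc fun t ht => ?_
        rw [show φ t = r * (T - t) * (κ * t ^ (κ - 1)) by ring, ENNReal.ofReal_mul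
          (mul_nonneg hr (sub_nonneg.mpr ht.2))]
        gcongr
        exact ENNReal.ofReal_le_of_le_toReal (htail t ht)
    _ ≤ 2 * ∫⁻ t in Ioi 0, ν (Ioi t) * ENNReal.ofReal (κ * t ^ (κ - 1)) := by
        gcongr 2 * ?_
        exact lintegral_mono_set Ioc_subset_Ioi_self

lemma exists_linear_tail_bound [IsProbabilityMeasure ν] {κ s : ℝ} (hκ : 0 < κ) (hs : 0 < s)
    (hconv : ConvexOn ℝ (Ioi 0) (fun t => ν.real (Ioi t)))
    (hmom : ∫⁻ x, ENNReal.ofReal (|x| ^ κ) ∂ν ≤ 1) :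
    ∃ r T, 0 ≤ r ∧ s ≤ T ∧ ν.real (Ioi s) = r * (T - s) ∧ r * T ≤ 1 / 2 ∧
      2 * r * T ^ (κ + 1) ≤ κ + 1 := by
  set G := fun t => ν.real (Ioi t)
  set r := -derivWithin G (Ioi s) s
  have htangent : ∀ t, 0 < t → G s - r * (t - s) ≤ G t := fun t ht => by
    simpa [r] using hconv.add_rightDeriv_mul_sub_le (by rwa [interior_Ioi]) (mem_Ioi.mpr ht)
  have hG_nonneg : 0 ≤ G s := measureReal_nonneg
  have hr : 0 ≤ r := by
    have h := htangent (s + 1) (by linarith)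
    have hanti : G (s + 1) ≤ G s := measureReal_mono (Ioi_subset_Ioi (by linarith))
    linarith
  have hhalf : G s + r * s ≤ 1 / 2 := by
    have hcont : Continuous fun t => G s - r * (t - s) := by fun_prop
    have hlim := (hcont.tendsto 0).mono_left (nhdsWithin_le_nhds (s := Ioi 0))
    rw [zero_sub, mul_neg, sub_neg_eq_add] at hlim
    exact le_of_tendsto hlim (eventually_nhdsWithin_of_forall fun t (ht : 0 < t) =>
      (htangent t ht).trans (measureReal_Ioi_le_half ht.le))
  -- a flat tangent forces the tail to vanish, since it tends to `0`
  rcases hr.eq_or_lt with hr0 | hrpos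
  · refine ⟨0, s, le_rfl, le_rfl, ?_, by norm_num, by norm_num; linarith⟩
    have : G s ≤ 0 := ge_of_tendsto (tendsto_measureReal_Ioi_atTop ν)
      (eventually_gt_atTop 0 |>.mono fun t ht => by simpa [← hr0] using htangent t ht)
    simp only [G] at this ⊢
    linarith
  · set T := s + G s / r
    have hrT : r * (T - s) = G s := by simp only [T]; field_simp; ring
    refine ⟨r, T, hr, le_add_of_nonneg_right (by positivity), hrT.symm, by linarith, ?_⟩
    have hT : 0 ≤ T := by positivity
    have key := (ofReal_le_lintegral_abs_rpow (ν := ν) hκ hr hT fun t ht => by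
      have := htangent t ht.1
      nlinarith).trans hmom
    rw [ENNReal.ofReal_le_one, div_le_one (by linarith)] at key
    exact key

theorem measureReal_Ici_le [IsProbabilityMeasure ν] {κ s : ℝ} (hκ : 0 < κ) (hs : 0 < s)
    (hconv : ConvexOn ℝ (Ioi 0) (fun t => ν.real (Ioi t)))
    (hmom : ∫⁻ x, ENNReal.ofReal (|x| ^ κ) ∂ν ≤ 1) :
    ν.real (Ici s) ≤ 1 / 2 * (κ / (κ + 1)) ^ κ / s ^ κ ∧
      (s ^ κ ≤ κ ^ κ / (κ + 1) ^ (κ - 1) →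
        ν.real (Ici s) ≤ 1 / 2 - 1 / 2 * s / (κ + 1) ^ (1 / κ)) := by
  have hq : ν.real (Ici s) ≤ ν.real (Ioi s) := measureReal_Ici_le_of_continuousWithinAt
    ((hconv.continuousOn isOpen_Ioi).continuousAt (Ioi_mem_nhds hs)).continuousWithinAt
  obtain ⟨r, T, hr, hsT, hG, hhalf, hmomT⟩ := exists_linear_tail_bound hκ hs hconv hmom
  rw [hG] at hq
  exact ⟨hq.trans (mul_sub_le_of_two_mul_rpow_le hκ hr hs hsT hmomT), fun hreg =>
    hq.trans (mul_sub_le_of_mul_le_half hκ hr hs hsT hhalf hmomT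
      (add_one_mul_le_of_rpow_le hκ hs.le hreg))⟩

end SymmetricMeasure

lemma Real.sign_ne_sign_iff_of_neg {x μ : ℝ} (hμ : μ < 0) : sign x ≠ sign μ ↔ 0 ≤ x := by
  rw [sign_of_neg hμ]
  rcases lt_trichotomy x 0 with h | rfl | h
  · simp [sign_of_neg h, h]
  · simp
  · norm_num [sign_of_pos h, h.le]

lemma Real.sign_ne_sign_iff_of_pos {x μ : ℝ} (hμ : 0 < μ) : sign x ≠ sign μ ↔ x ≤ 0 := by
  rw [sign_of_pos hμ]
  rcases lt_trichotomy x 0 with h | rfl | h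
  · norm_num [sign_of_neg h, h.le]
  · simp
  · simp [sign_of_pos h, h]

section Normalization

variable {Ω : Type*} [MeasurableSpace Ω] {P : Measure Ω}

lemma isNegInvariant_map [IsFiniteMeasure P] {X : Ω → ℝ} (hX : AEMeasurable X P)
    (h : ∀ t, P {ω | t ≤ X ω} = P {ω | t ≤ -X ω}) : (P.map X).IsNegInvariant := by
  refine ⟨(Measure.ext_of_Ici _ _ fun t => ?_).symm⟩
  rw [Measure.neg, Measure.map_apply measurable_neg measurableSet_Ici,
    Measure.map_apply_of_aemeasurable hX (measurableSet_Ici.preimage measurable_neg),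
    Measure.map_apply_of_aemeasurable hX measurableSet_Ici]
  exact h t

lemma measureReal_map_Ioi [IsProbabilityMeasure P] {X : Ω → ℝ} (hX : AEMeasurable X P) (t : ℝ) :
    (P.map X).real (Ioi t) = 1 - P.real {ω | X ω ≤ t} := by
  have : IsProbabilityMeasure (P.map X) := Measure.isProbabilityMeasure_map hX
  rw [← compl_Iic, measureReal_compl measurableSet_Iic, probReal_univ, Measure.real,
    Measure.map_apply_of_aemeasurable hX measurableSet_Iic]
  rfl

lemma convexOn_measureReal_map_Ioi [IsProbabilityMeasure P] {g : Ω → ℝ} {μ σ : ℝ}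
    (hg : AEMeasurable g P) (hσ : 0 < σ)
    (hconc : ConcaveOn ℝ (Ioi μ) (fun t => P.real {ω | g ω ≤ t})) :
    ConvexOn ℝ (Ioi 0) (fun t => (P.map fun ω => (g ω - μ) / σ).real (Ioi t)) := by
  set a : ℝ →ᵃ[ℝ] ℝ := AffineMap.lineMap μ (μ + σ)
  have ha : ∀ t, a t = μ + σ * t := fun t => by
    simp only [a, AffineMap.lineMap_apply_ring']; ring
  have hpre : a ⁻¹' Ioi μ = Ioi 0 := by
    ext t; simp [ha, hσ]
  have hconv := (convexOn_const (1 : ℝ) (convex_Ioi (0 : ℝ))).sub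
    (hpre ▸ hconc.comp_affineMap a)
  refine hconv.congr fun t _ => ?_
  rw [measureReal_map_Ioi ((hg.sub_const μ).div_const σ)]
  simp only [Pi.sub_apply, Function.comp_apply, ha]
  congr 2
  ext ω
  simp only [mem_ofPred_eq, div_le_iff₀ hσ]
  constructor <;> intro h <;> linarith

lemma lintegral_abs_rpow_map_le_one {g : Ω → ℝ} {μ σ κ : ℝ} (hg : AEMeasurable g P)
    (hσ : 0 < σ) (hint : Integrable (fun ω => |g ω - μ| ^ κ) P)
    (hmom : ∫ ω, |g ω - μ| ^ κ ∂P ≤ σ ^ κ) :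
    ∫⁻ x, ENNReal.ofReal (|x| ^ κ) ∂(P.map fun ω => (g ω - μ) / σ) ≤ 1 := by
  have hscale : ∀ ω, |(g ω - μ) / σ| ^ κ = |g ω - μ| ^ κ / σ ^ κ := fun ω => by
    rw [abs_div, abs_of_pos hσ, div_rpow (abs_nonneg _) hσ.le]
  rw [lintegral_map' (by fun_prop) ((hg.sub_const μ).div_const σ)]
  simp only [hscale]
  rw [← ofReal_integral_eq_lintegral_ofReal (hint.div_const _)
      (ae_of_all _ fun ω => by positivity), integral_div, ENNReal.ofReal_le_one,
    div_le_one (by positivity)]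
  exact hmom

lemma measure_sign_ne_sign_eq_map_Ici {g : Ω → ℝ} {μ σ : ℝ} (hg : AEMeasurable g P)
    (hμ : μ ≠ 0) (hσ : 0 < σ)
    (hsymm : ∀ t : ℝ, P {ω | t ≤ g ω - μ} = P {ω | t ≤ μ - g ω}) :
    P {ω | sign (g ω) ≠ sign μ} = (P.map fun ω => (g ω - μ) / σ) (Ici (|μ| / σ)) := by
  rw [Measure.map_apply_of_aemeasurable ((hg.sub_const μ).div_const σ) measurableSet_Ici]
  simp only [preimage, mem_Ici, div_le_div_iff_of_pos_right hσ]
  rcases hμ.lt_or_gt with hneg | hpos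
  · simp only [sign_ne_sign_iff_of_neg hneg, abs_of_neg hneg, neg_le_sub_iff_le_add,
      le_add_iff_nonneg_left]
  · simp only [sign_ne_sign_iff_of_pos hpos, abs_of_pos hpos, hsymm μ, le_sub_self_iff]

end Normalization

theorem stmt_14_general {Ω : Type*} [MeasureSpace Ω] (hP : IsProbabilityMeasure (volume : Measure Ω))
    (g : Ω → ℝ) (μ σ κ : ℝ) (hκ : 0 < κ) (hμ : μ ≠ 0) (hσ : 0 < σ)
    (hmeas : AEMeasurable g)
    (hsymm : ∀ t : ℝ, volume {ω | t ≤ g ω - μ} = volume {ω | t ≤ μ - g ω})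
    (hconc : ConcaveOn ℝ (Set.Ioi μ) (fun t => (volume {ω | g ω ≤ t}).toReal))
    (hint : Integrable (fun ω => |g ω - μ| ^ κ))
    (hmom : ∫ ω, |g ω - μ| ^ κ ≤ σ ^ κ)
    (S : ℝ) (hS : S = |μ| / σ)
    (q : ℝ) (hq : q = (volume {ω | Real.sign (g ω) ≠ Real.sign μ}).toReal) :
    (κ ^ κ / (κ + 1) ^ (κ - 1) ≤ S ^ κ →
      q ≤ (1 / 2) * (κ / (κ + 1)) ^ κ / S ^ κ) ∧
    (S ^ κ ≤ κ ^ κ / (κ + 1) ^ (κ - 1) →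
      q ≤ 1 / 2 - (1 / 2) * S / (κ + 1) ^ (1 / κ)) ∧
    q < 1 / 2 := by
  set ν := (volume : Measure Ω).map fun ω => (g ω - μ) / σ
  have hY : AEMeasurable (fun ω => (g ω - μ) / σ) := (hmeas.sub_const μ).div_const σ
  have : IsProbabilityMeasure ν := Measure.isProbabilityMeasure_map hY
  have : ν.IsNegInvariant := isNegInvariant_map hY fun t => by
    simpa only [← neg_div, neg_sub, le_div_iff₀ hσ] using hsymm (t * σ)
  have hS0 : 0 < S := hS ▸ div_pos (abs_pos.mpr hμ) hσ
  have hqν : q = ν.real (Ici S) := by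
    rw [hq, hS, measure_sign_ne_sign_eq_map_Ici hmeas hμ hσ hsymm]
    rfl
  obtain ⟨hA, hB⟩ := measureReal_Ici_le hκ hS0 (convexOn_measureReal_map_Ioi hmeas hσ hconc)
    (lintegral_abs_rpow_map_le_one hmeas hσ hint hmom)
  rw [hqν]
  refine ⟨fun _ => hA, hB, ?_⟩
  rcases le_total (κ ^ κ / (κ + 1) ^ (κ - 1)) (S ^ κ) with hreg | hreg
  · exact hA.trans_lt (half_mul_rpow_div_rpow_lt_half hκ hS0 hreg)
  · exact (hB hreg).trans_lt (sub_lt_self _ (by positivity))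

/-- Sign failure probability for a symmetric unimodal random variable `g` centered at
`μ ≠ 0` with `E[|g - μ|^κ] ≤ σ^κ`: with `S = |μ|/σ`, the failure probability
`q = P(sign g ≠ sign μ)` satisfies the two-regime Gauss-type bound, and `q < 1/2`. -/
theorem stmt_14 {Ω : Type*} [MeasureSpace Ω] (hP : IsProbabilityMeasure (volume : Measure Ω))
    (g : Ω → ℝ) (μ σ κ : ℝ) (hκ : 0 < κ) (hμ : μ ≠ 0) (hσ : 0 < σ)
    (hmeas : AEMeasurable g)
    (hsymm : ∀ t : ℝ, volume {ω | t ≤ g ω - μ} = volume {ω | t ≤ μ - g ω})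
    (hconv : ConvexOn ℝ (Set.Iio μ) (fun t => (volume {ω | g ω ≤ t}).toReal))
    (hconc : ConcaveOn ℝ (Set.Ioi μ) (fun t => (volume {ω | g ω ≤ t}).toReal))
    (hint : Integrable (fun ω => |g ω - μ| ^ κ))
    (hmom : ∫ ω, |g ω - μ| ^ κ ≤ σ ^ κ)
    (S : ℝ) (hS : S = |μ| / σ)
    (q : ℝ) (hq : q = (volume {ω | Real.sign (g ω) ≠ Real.sign μ}).toReal) :
    (κ ^ κ / (κ + 1) ^ (κ - 1) ≤ S ^ κ →
      q ≤ (1 / 2) * (κ / (κ + 1)) ^ κ / S ^ κ) ∧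
    (S ^ κ ≤ κ ^ κ / (κ + 1) ^ (κ - 1) →
      q ≤ 1 / 2 - (1 / 2) * S / (κ + 1) ^ (1 / κ)) ∧
    q < 1 / 2 :=
  stmt_14_general hP g μ σ κ hκ hμ hσ hmeas hsymm hconc hint hmom S hS q hq
end

section
/- Let X_1, ..., X_M be i.i.d. {±1}-valued random variables with P(X_i = -1) = q < 1/2, and let ε := 1/2 - q. Then the probability that the majority vote is incorrect satisfies P(∑_{i=1}^M X_i ≤ 0) ≤ 1/(1 + M/(1/(4ε²) - 1)). -/
/-!
The number of correct votes minus the number of wrong ones, `S = ∑ Xᵢ`, has mean `2Mε` and,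
by independence, variance `M(1 - 4ε²)`. The majority is wrong when `S ≤ 0`, a deviation of at
least `2Mε` below the mean, and Cantelli's one-sided Chebyshev inequality
`P(Y ≤ E Y - t) ≤ 1 / (1 + t² / Var Y)` gives exactly the stated bound.
-/

open MeasureTheory ProbabilityTheory Finset

namespace ProbabilityTheory

variable {Ω : Type*} {mΩ : MeasurableSpace Ω} {μ : Measure Ω} [IsProbabilityMeasure μ]
  {Y : Ω → ℝ}

/-- Markov's inequality applied to `(μ[Y] + u - Y)²`. -/
lemma measureReal_le_sub_le_variance_add_sq_div_sq (hY : MemLp Y 2 μ) {t u : ℝ} (ht : 0 < t)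
    (hu : 0 ≤ u) :
    μ.real {ω | Y ω ≤ μ[Y] - t} ≤ (Var[Y; μ] + u ^ 2) / (t + u) ^ 2 := by
  set Z : Ω → ℝ := fun ω ↦ μ[Y] + u - Y ω with hZ_def
  have hZ : MemLp Z 2 μ := (memLp_const _).sub hY
  have hZ_mean : μ[Z] = u := by
    rw [hZ_def, integral_sub (integrable_const _) (hY.integrable one_le_two), integral_const]
    simp
  have hZ_sq : ∫ ω, Z ω ^ 2 ∂μ = Var[Y; μ] + u ^ 2 := by
    have h := variance_eq_sub hZ
    rw [variance_const_sub hY.aestronglyMeasurable, hZ_mean] at h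
    simp only [Pi.pow_apply] at h
    linarith
  have hsub : {ω | Y ω ≤ μ[Y] - t} ⊆ {ω | (t + u) ^ 2 ≤ Z ω ^ 2} := fun ω hω ↦ by
    have hZω : t + u ≤ Z ω := by simp only [Z]; linarith [show Y ω ≤ μ[Y] - t from hω]
    exact pow_le_pow_left₀ (by positivity) hZω 2
  rw [le_div_iff₀ (by positivity), mul_comm, ← hZ_sq]
  calc (t + u) ^ 2 * μ.real {ω | Y ω ≤ μ[Y] - t}
      ≤ (t + u) ^ 2 * μ.real {ω | (t + u) ^ 2 ≤ Z ω ^ 2} :=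
        mul_le_mul_of_nonneg_left (measureReal_mono hsub) (by positivity)
    _ ≤ ∫ ω, Z ω ^ 2 ∂μ :=
        mul_meas_ge_le_integral_of_nonneg (ae_of_all _ fun ω ↦ sq_nonneg (Z ω))
          hZ.integrable_sq _

/-- **Cantelli's inequality**. When `Var[Y; μ] = 0` the right-hand side is `1`. -/
theorem measureReal_le_sub_le_one_div_one_add_sq_div_variance (hY : MemLp Y 2 μ) {t : ℝ}
    (ht : 0 < t) :
    μ.real {ω | Y ω ≤ μ[Y] - t} ≤ 1 / (1 + t ^ 2 / Var[Y; μ]) := by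
  have hV := variance_nonneg Y μ
  -- the shift `u = Var[Y; μ] / t` minimises the bound
  refine (measureReal_le_sub_le_variance_add_sq_div_sq hY ht (div_nonneg hV ht.le)).trans ?_
  rcases hV.eq_or_lt with hV0 | hVpos
  · simp [← hV0]
  · apply le_of_eq
    field_simp
    ring

section Sign

variable {X : Ω → ℝ}

lemma memLp_of_forall_eq_one_or_eq_neg_one (hX : ∀ ω, X ω = 1 ∨ X ω = -1)
    (hXm : AEStronglyMeasurable X μ) (p : ENNReal) :
    MemLp X p μ :=
  MemLp.of_bound hXm 1 (ae_of_all _ fun ω ↦ by rcases hX ω with h | h <;> simp [h])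

lemma integral_eq_one_sub_two_mul_of_forall_eq_one_or_eq_neg_one (hX : ∀ ω, X ω = 1 ∨ X ω = -1)
    (hXm : Measurable X) :
    μ[X] = 1 - 2 * μ.real {ω | X ω = -1} := by
  have hA : MeasurableSet {ω | X ω = -1} := hXm (measurableSet_singleton _)
  have hX_eq : ∀ ω, X ω = 1 - {ω | X ω = -1}.indicator (fun _ ↦ (2 : ℝ)) ω := fun ω ↦ by
    rcases hX ω with h | h <;> norm_num [Set.indicator, h]
  rw [integral_congr_ae (ae_of_all _ hX_eq),
    integral_sub (integrable_const _) ((integrable_const _).indicator hA),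
    integral_indicator_const _ hA, integral_const]
  simp [mul_comm]

lemma variance_eq_one_sub_sq_of_forall_eq_one_or_eq_neg_one (hX : ∀ ω, X ω = 1 ∨ X ω = -1)
    (hXm : AEStronglyMeasurable X μ) :
    Var[X; μ] = 1 - μ[X] ^ 2 := by
  have hX_sq : X ^ 2 = fun _ ↦ 1 := funext fun ω ↦ by rcases hX ω with h | h <;> simp [h]
  rw [variance_eq_sub (memLp_of_forall_eq_one_or_eq_neg_one hX hXm 2), hX_sq]
  simp

end Sign

end ProbabilityTheory

theorem stmt_15_general {Ω : Type*} [MeasureSpace Ω] (hP : IsProbabilityMeasure (volume : Measure Ω))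
    (M : ℕ) (hM : 0 < M) (X : Fin M → Ω → ℝ)
    (hval : ∀ i ω, X i ω = 1 ∨ X i ω = -1)
    (hmeas : ∀ i, Measurable (X i))
    (hindep : iIndepFun X volume)
    (q : ℝ) (hq : q < 1 / 2)
    (hqval : ∀ i, (volume {ω | X i ω = -1}).toReal = q)
    (ε : ℝ) (hε : ε = 1 / 2 - q) :
    (volume {ω | ∑ i, X i ω ≤ 0}).toReal ≤
      1 / (1 + (M : ℝ) / (1 / (4 * ε ^ 2) - 1)) := by
  have hL2 i : MemLp (X i) 2 volume :=
    memLp_of_forall_eq_one_or_eq_neg_one (hval i) (hmeas i).aestronglyMeasurable 2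
  have hmean i : ∫ ω, X i ω = 2 * ε := by
    rw [integral_eq_one_sub_two_mul_of_forall_eq_one_or_eq_neg_one (hval i) (hmeas i),
      measureReal_def, hqval i, hε]
    ring
  have hS_mean : ∫ ω, (∑ i, X i) ω = M * (2 * ε) := by
    simp only [Finset.sum_apply]
    rw [integral_finsetSum _ fun i _ ↦ (hL2 i).integrable one_le_two]
    simp [hmean]
  have hS_var : Var[∑ i, X i; volume] = M * (1 - 4 * ε ^ 2) := by
    rw [IndepFun.variance_sum (fun i _ ↦ hL2 i) fun i _ j _ hij ↦ hindep.indepFun hij]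
    simp [variance_eq_one_sub_sq_of_forall_eq_one_or_eq_neg_one (hval _)
      (hmeas _).aestronglyMeasurable, hmean]
    ring
  have hMpos : (0 : ℝ) < M := Nat.cast_pos.2 hM
  have hεpos : 0 < ε := by linarith
  have h := measureReal_le_sub_le_one_div_one_add_sq_div_variance
    (memLp_finsetSum' univ fun i _ ↦ hL2 i) (mul_pos hMpos (mul_pos two_pos hεpos))
  have hratio : (M * (2 * ε)) ^ 2 / (M * (1 - 4 * ε ^ 2)) = M / (1 / (4 * ε ^ 2) - 1) := by
    rw [show 1 / (4 * ε ^ 2) - 1 = (1 - 4 * ε ^ 2) / (4 * ε ^ 2) by field_simp,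
      div_div_eq_mul_div, show ((M : ℝ) * (2 * ε)) ^ 2 = M * (M * (4 * ε ^ 2)) by ring,
      mul_div_mul_left _ _ hMpos.ne']
  rw [hS_mean, hS_var, sub_self, hratio] at h
  simpa [Finset.sum_apply, measureReal_def] using h

/-- Majority-vote failure probability: for i.i.d. `±1`-valued random variables with
`P(X_i = -1) = q < 1/2` and `ε = 1/2 - q`,
`P(∑ X_i ≤ 0) ≤ 1/(1 + M/(1/(4ε²) - 1))`. -/
theorem stmt_15 {Ω : Type*} [MeasureSpace Ω] (hP : IsProbabilityMeasure (volume : Measure Ω))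
    (M : ℕ) (hM : 0 < M) (X : Fin M → Ω → ℝ)
    (hval : ∀ i ω, X i ω = 1 ∨ X i ω = -1)
    (hmeas : ∀ i, Measurable (X i))
    (hindep : iIndepFun X volume)
    (hident : ∀ i j : Fin M, Measure.map (X i) volume = Measure.map (X j) volume)
    (q : ℝ) (hq0 : 0 ≤ q) (hq : q < 1 / 2)
    (hqval : ∀ i, (volume {ω | X i ω = -1}).toReal = q)
    (ε : ℝ) (hε : ε = 1 / 2 - q) :
    (volume {ω | ∑ i, X i ω ≤ 0}).toReal ≤
      1 / (1 + (M : ℝ) / (1 / (4 * ε ^ 2) - 1)) :=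
  stmt_15_general hP M hM X hval hmeas hindep q hq hqval ε hε
end
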